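/- arXiv:math/0310300 — 9 statements merged into one kernel-verified Lean document; each statement's English description precedes it below -/
import Mathlib

section
/- For every natural number n there exists a unique finitely supported sequence d : ℕ → {0,1} such that n = Σ_j d(j)·S(j) and, for every j ≥ 0, Σ_{i=0}^{j} d(i)·S(i) < S(j+1). -/
/-!
Existence is the greedy algorithm: for `S k ≤ n < S (k + 1)` the doubling condition gives
`n - S k < S k`, so the remainder is represented with digits below `k`. For uniqueness, the
condition says that the prefix sums `P j = ∑ i < j, d i * S i` satisfy `P j < S j`; since
`P (j + 1) = P j + d j * S j`, the digit `d j` is `1` exactly when `S j ≤ P (j + 1)`, so the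
digits are read off from the top down once `P N = n` for large `N`.
-/

open Finset

namespace GreedyDigits

variable (S : ℕ → ℕ)

def prefixSum (d : ℕ → Bool) (j : ℕ) : ℕ := ∑ i ∈ range j, (d i).toNat * S i

variable {S}

theorem prefixSum_succ (d : ℕ → Bool) (j : ℕ) :
    prefixSum S d (j + 1) = prefixSum S d j + (d j).toNat * S j :=
  sum_range_succ _ _

theorem prefixSum_congr {d e : ℕ → Bool} {j : ℕ} (h : ∀ i < j, d i = e i) :
    prefixSum S d j = prefixSum S e j :=
  sum_congr rfl fun i hi => by rw [h i (mem_range.mp hi)]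

theorem prefixSum_eq_of_le {d : ℕ → Bool} {k j : ℕ} (hd : ∀ i, k ≤ i → d i = false)
    (hkj : k ≤ j) : prefixSum S d j = prefixSum S d k := by
  refine (sum_subset (range_subset_range.mpr hkj) fun i _ hi => ?_).symm
  rw [hd i (by simpa using hi), Bool.toNat_false, zero_mul]

theorem finsum_eq_prefixSum {d : ℕ → Bool} {k : ℕ} (hd : ∀ i, k ≤ i → d i = false) :
    ∑ᶠ j, (d j).toNat * S j = prefixSum S d k := by
  refine finsum_eq_finsetSum_of_support_subset _ fun i hi => ?_
  by_contra hik
  simp_all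

theorem prefixSum_lt_of_succ (hS0 : 0 < S 0) {d : ℕ → Bool}
    (h : ∀ j, prefixSum S d (j + 1) < S (j + 1)) : ∀ j, prefixSum S d j < S j
  | 0 => by simpa [prefixSum] using hS0
  | j + 1 => h j

theorem exists_prefixSum_eq_of_lt (hS : Monotone S) (hS0 : S 0 = 1)
    (hS2 : ∀ j, S (j + 1) ≤ 2 * S j) (k : ℕ) :
    ∀ n < S k, ∃ d : ℕ → Bool, (∀ i, k ≤ i → d i = false) ∧ prefixSum S d k = n ∧
      ∀ j, prefixSum S d (j + 1) < S (j + 1) := by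
  induction k with
  | zero =>
    intro n hn
    refine ⟨fun _ => false, fun _ _ => rfl, by simp [prefixSum]; omega, fun j => ?_⟩
    have := hS (Nat.zero_le (j + 1))
    simp only [prefixSum, Bool.toNat_false, zero_mul, sum_const_zero]
    omega
  | succ k ih =>
    intro n hn
    by_cases hnk : n < S k
    · obtain ⟨d, hd, hsum, hpart⟩ := ih n hnk
      exact ⟨d, fun i hi => hd i (by omega), by rw [prefixSum_eq_of_le hd k.le_succ, hsum], hpart⟩
    obtain ⟨d, hd, hsum, hpart⟩ := ih (n - S k) (by have := hS2 k; omega)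
    set d' := Function.update d k true with hupdate
    have hagree : ∀ i < k, d' i = d i := fun i hi => Function.update_of_ne hi.ne _ _
    have hd' : ∀ i, k + 1 ≤ i → d' i = false := fun i hi => by
      rw [hupdate, Function.update_of_ne (by omega), hd i (by omega)]
    have hsum' : prefixSum S d' (k + 1) = n := by
      rw [prefixSum_succ, prefixSum_congr hagree, hsum, hupdate, Function.update_self]
      simp only [Bool.toNat_true, one_mul]
      omega
    refine ⟨d', hd', hsum', fun j => ?_⟩
    rcases lt_or_ge j k with hjk | hkj
    · rw [prefixSum_congr fun i hi => hagree i (by omega)]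
      exact hpart j
    · rw [prefixSum_eq_of_le hd' (by omega), hsum']
      exact hn.trans_le (hS (by omega))

theorem digit_eq_and_prefixSum_eq {d e : ℕ → Bool} {j : ℕ} (hd : prefixSum S d j < S j)
    (he : prefixSum S e j < S j) (h : prefixSum S d (j + 1) = prefixSum S e (j + 1)) :
    d j = e j ∧ prefixSum S d j = prefixSum S e j := by
  rw [prefixSum_succ, prefixSum_succ] at h
  cases hdj : d j <;> cases hej : e j <;>
    simp only [hdj, hej, Bool.toNat_true, Bool.toNat_false, one_mul, zero_mul, add_zero] at h <;>
    simp <;> omega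

theorem eq_of_prefixSum_eq {d e : ℕ → Bool} (hd : ∀ j, prefixSum S d j < S j)
    (he : ∀ j, prefixSum S e j < S j) :
    ∀ {N}, prefixSum S d N = prefixSum S e N → ∀ j < N, d j = e j
  | 0, _, j, hj => absurd hj j.not_lt_zero
  | N + 1, h, j, hj => by
    obtain ⟨hdigit, hprefix⟩ := digit_eq_and_prefixSum_eq (hd N) (he N) h
    rcases Nat.lt_succ_iff_lt_or_eq.mp hj with hjN | rfl
    · exact eq_of_prefixSum_eq hd he hprefix j hjN
    · exact hdigit

theorem eq_of_finsum_eq (hS0 : 0 < S 0) {d e : ℕ → Bool} {N : ℕ}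
    (hd : ∀ i, N ≤ i → d i = false) (he : ∀ i, N ≤ i → e i = false)
    (hdpart : ∀ j, prefixSum S d (j + 1) < S (j + 1))
    (hepart : ∀ j, prefixSum S e (j + 1) < S (j + 1))
    (h : ∑ᶠ j, (d j).toNat * S j = ∑ᶠ j, (e j).toNat * S j) : d = e := by
  rw [finsum_eq_prefixSum hd, finsum_eq_prefixSum he] at h
  funext j
  rcases lt_or_ge j N with hj | hj
  · exact eq_of_prefixSum_eq (prefixSum_lt_of_succ hS0 hdpart)
      (prefixSum_lt_of_succ hS0 hepart) h j hj
  · rw [hd j hj, he j hj]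

theorem exists_forall_ge_eq_false {d : ℕ → Bool} (hd : {j | d j = true}.Finite) :
    ∃ N, ∀ j, N ≤ j → d j = false := by
  obtain ⟨N, hN⟩ := hd.bddAbove
  exact ⟨N + 1, fun j hj => Bool.eq_false_iff.mpr fun hdj => by have := hN hdj; omega⟩

theorem finite_of_forall_ge_eq_false {d : ℕ → Bool} {N : ℕ} (hd : ∀ j, N ≤ j → d j = false) :
    {j | d j = true}.Finite :=
  (Set.finite_Iio N).subset fun j hj => Set.mem_Iio.mpr <| lt_of_not_ge fun h => by
    simp [hd j h] at hj

end GreedyDigits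

open GreedyDigits in
/-- Let `S : ℕ → ℕ` be a strictly increasing sequence with `S 0 = 1`
and `S (j+1) ≤ 2 * S j` for all `j`. Then for every natural number `n` there exists a
unique finitely supported sequence `d : ℕ → {0,1}` (modelled as `d : ℕ → Bool`) such that
`n = Σ_j d j * S j` and, for every `j ≥ 0`, `Σ_{i=0}^{j} d i * S i < S (j+1)`. -/
theorem stmt_0 (S : ℕ → ℕ) (hS : StrictMono S) (hS0 : S 0 = 1)
    (hS2 : ∀ j, S (j + 1) ≤ 2 * S j) (n : ℕ) :
    ∃! d : ℕ → Bool,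
      {j | d j = true}.Finite ∧
      n = ∑ᶠ j, (d j).toNat * S j ∧
      ∀ j, ∑ i ∈ Finset.range (j + 1), (d i).toNat * S i < S (j + 1) := by
  obtain ⟨d, hd, hdsum, hdpart⟩ := exists_prefixSum_eq_of_lt hS.monotone hS0 hS2 (n + 1) n
    ((hS.id_le n).trans_lt (hS n.lt_succ_self))
  have hdsum' : n = ∑ᶠ j, (d j).toNat * S j := by rw [finsum_eq_prefixSum hd, hdsum]
  refine ⟨d, ⟨finite_of_forall_ge_eq_false hd, hdsum', hdpart⟩, ?_⟩
  rintro e ⟨hefin, hesum, hepart⟩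
  obtain ⟨N, he⟩ := exists_forall_ge_eq_false hefin
  exact eq_of_finsum_eq (hS0 ▸ Nat.one_pos) (fun j hj => he j (le_of_max_le_left hj))
    (fun j hj => hd j (le_of_max_le_right hj)) hepart hdpart (hesum.symm.trans hdsum')
end

section
/- The set Ω equals the closure, in {0,1}^ℕ with the product topology, of the set { ⟨n⟩ : n ∈ ℕ }. -/
private lemma uniq_lemma (S : ℕ → ℕ) (hS0 : S 0 = 1) :
    ∀ N (d e : ℕ → Bool),
    (∀ j, ∑ i ∈ Finset.range (j + 1), (d i).toNat * S i < S (j + 1)) →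
    (∀ j, ∑ i ∈ Finset.range (j + 1), (e i).toNat * S i < S (j + 1)) →
    ∑ i ∈ Finset.range N, (d i).toNat * S i = ∑ i ∈ Finset.range N, (e i).toNat * S i →
    ∀ i < N, d i = e i := by
  intro N
  induction N with
  | zero => intro d e _ _ _ i hi; omega
  | succ N ih =>
    intro d e hd he hsum i hi
    have hdN : ∀ (d : ℕ → Bool),
        (∀ j, ∑ i ∈ Finset.range (j + 1), (d i).toNat * S i < S (j + 1)) →
        ∑ i ∈ Finset.range N, (d i).toNat * S i < S N := by
      intro d hd
      cases N with
      | zero => simpa [hS0]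
      | succ M => exact hd M
    have h1 := hdN d hd
    have h2 := hdN e he
    rw [Finset.sum_range_succ, Finset.sum_range_succ] at hsum
    have hDE : d N = e N := by
      cases hdd : d N <;> cases hee : e N <;>
        simp only [hdd, hee, Bool.toNat_true, Bool.toNat_false, zero_mul, one_mul,
          add_zero] at hsum <;> first | rfl | omega
    have hsum' : ∑ i ∈ Finset.range N, (d i).toNat * S i
        = ∑ i ∈ Finset.range N, (e i).toNat * S i := by
      rw [hDE] at hsum; omega
    rcases Nat.lt_succ_iff_lt_or_eq.mp hi with h | h
    · exact ih d e hd he hsum' i h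
    · subst h; exact hDE

/-- With `S`, `Ω` and `⟨n⟩ = angle n` as before, and `{0,1}^ℕ` carrying
the product topology, the set `Ω` equals the closure of `{ ⟨n⟩ : n ∈ ℕ }`. -/
theorem stmt_2 (S : ℕ → ℕ) (hS : StrictMono S) (hS0 : S 0 = 1)
    (hS2 : ∀ j, S (j + 1) ≤ 2 * S j)
    (angle : ℕ → (ℕ → Bool))
    (hangle : ∀ n, {j | angle n j = true}.Finite ∧
      (∑ᶠ j, (angle n j).toNat * S j = n) ∧
      ∀ j, ∑ i ∈ Finset.range (j + 1), (angle n i).toNat * S i < S (j + 1)) :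
    {ω : ℕ → Bool | ∀ j, ∑ i ∈ Finset.range (j + 1), (ω i).toNat * S i < S (j + 1)}
      = closure (Set.range angle) := by
  have hclosed : IsClosed {ω : ℕ → Bool |
      ∀ j, ∑ i ∈ Finset.range (j + 1), (ω i).toNat * S i < S (j + 1)} := by
    have heq : {ω : ℕ → Bool |
        ∀ j, ∑ i ∈ Finset.range (j + 1), (ω i).toNat * S i < S (j + 1)}
        = ⋂ j, {ω : ℕ → Bool | ∑ i ∈ Finset.range (j + 1), (ω i).toNat * S i < S (j + 1)} := by
      ext ω; simp [Set.mem_iInter]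
    rw [heq]
    refine isClosed_iInter fun j => ?_
    have hc : Continuous fun ω : ℕ → Bool =>
        ∑ i ∈ Finset.range (j + 1), (ω i).toNat * S i := by
      refine continuous_finset_sum _ fun i _ => ?_
      exact Continuous.comp (continuous_of_discreteTopology
        (f := fun b : Bool => b.toNat * S i)) (continuous_apply i)
    have hpre : {ω : ℕ → Bool | ∑ i ∈ Finset.range (j + 1), (ω i).toNat * S i < S (j + 1)}
        = (fun ω : ℕ → Bool => ∑ i ∈ Finset.range (j + 1), (ω i).toNat * S i) ⁻¹'
          (Set.Iio (S (j + 1))) := rfl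
    rw [hpre]
    exact IsClosed.preimage hc (isClosed_discrete (Set.Iio (S (j + 1))))
  have hsub : Set.range angle ⊆ {ω : ℕ → Bool |
      ∀ j, ∑ i ∈ Finset.range (j + 1), (ω i).toNat * S i < S (j + 1)} := by
    rintro x ⟨n, rfl⟩
    exact (hangle n).2.2
  refine Set.Subset.antisymm ?_ (closure_minimal hsub hclosed)
  intro ω hω
  set nk : ℕ → ℕ := fun k => ∑ i ∈ Finset.range k, (ω i).toNat * S i with hnk
  have hagree : ∀ k, ∀ i < k, angle (nk k) i = ω i := by
    intro k
    set d := angle (nk k) with hdd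
    set e : ℕ → Bool := fun i => if i < k then ω i else false with hee
    have hd := (hangle (nk k)).2.2
    have he : ∀ j, ∑ i ∈ Finset.range (j + 1), (e i).toNat * S i < S (j + 1) := by
      intro j
      refine lt_of_le_of_lt (Finset.sum_le_sum fun i _ => ?_) (hω j)
      by_cases hik : i < k <;> simp [hee, hik]
    obtain ⟨M, hM⟩ := ((hangle (nk k)).1).bddAbove
    set N := max (M + 1) k with hN
    have hsupp : Function.support (fun j => (d j).toNat * S j) ⊆ ↑(Finset.range N) := by
      intro j hj
      simp only [Function.mem_support, ne_eq] at hj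
      have : d j = true := by
        cases h : d j
        · simp [h] at hj
        · rfl
      have : j ≤ M := hM this
      simp only [Finset.coe_range, Set.mem_Iio]
      omega
    have hsumd : ∑ i ∈ Finset.range N, (d i).toNat * S i = nk k := by
      rw [← finsum_eq_sum_of_support_subset _ hsupp]
      exact (hangle (nk k)).2.1
    have hsume : ∑ i ∈ Finset.range N, (e i).toNat * S i = nk k := by
      rw [hnk]
      refine (Finset.sum_subset (Finset.range_subset_range.mpr (le_max_right _ _))
        fun x _ hx => ?_).symm.trans (Finset.sum_congr rfl fun x hx => ?_)
      · simp only [Finset.mem_range, not_lt] at hx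
        simp [hee, Nat.not_lt.mpr hx]
      · simp only [Finset.mem_range] at hx
        simp [hee, hx]
    have := uniq_lemma S hS0 N d e hd he (hsumd.trans hsume.symm)
    intro i hik
    have hiN : i < N := lt_of_lt_of_le hik (le_max_right _ _)
    have := this i hiN
    rw [this, hee]
    simp [hik]
  have htend : Filter.Tendsto (fun k => angle (nk k)) Filter.atTop (nhds ω) := by
    rw [tendsto_pi_nhds]
    intro i
    refine Filter.Tendsto.congr' ?_ tendsto_const_nhds
    filter_upwards [Filter.eventually_ge_atTop (i + 1)] with k hk
    exact (hagree k i (by omega)).symm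
  exact mem_closure_of_tendsto htend (Filter.Eventually.of_forall fun k => Set.mem_range_self _)
end

section
/- Suppose Q : ℕ → ℕ satisfies S(k) = S(k−1) + S(Q(k)) for every k ≥ 1 (i.e., S admits the kneading map Q). Then Ω = { ω ∈ {0,1}^ℕ : for every j, if ω(j) = 1 then ω(i) = 0 for all i with Q(j+1) ≤ i ≤ j−1 }. -/
/-!
Write `Σ ω n` for `weightedSum S ω n = ∑_{i<n} ω(i) S(i)`. If `ω(i) = ω(j) = 1` with `Q(j+1) ≤ i < j`, then
`Σ ω (j+1) ≥ S(i) + S(j) ≥ S(Q(j+1)) + S(j) = S(j+1)`, so the gap condition is necessary.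
Conversely, under the gap condition one shows `Σ ω n < S n` for all `n` by induction: if
`ω(n) = 1`, the digits below `n` vanish from `q = Q(n+1)` on, so
`Σ ω (n+1) = Σ ω (min q n) + S(n) < S(q) + S(n) = S(n+1)`.
-/

open Finset

namespace Kneading

variable (S : ℕ → ℕ) (ω : ℕ → Bool)

def weightedSum (n : ℕ) : ℕ := ∑ i ∈ range n, (ω i).toNat * S i

variable {S ω}

theorem weightedSum_succ (n : ℕ) :
    weightedSum S ω (n + 1) = weightedSum S ω n + (ω n).toNat * S n :=
  sum_range_succ _ n

theorem weightedSum_eq_min_of_eq_false {q n : ℕ} (h : ∀ i, q ≤ i → i < n → ω i = false) :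
    weightedSum S ω n = weightedSum S ω (min q n) := by
  have hzero : ∑ i ∈ Ico (min q n) n, (ω i).toNat * S i = 0 := by
    refine sum_eq_zero fun i hi => ?_
    obtain ⟨hqi, hin⟩ := mem_Ico.mp hi
    rw [h i (by omega) hin, Bool.toNat_false, zero_mul]
  rw [weightedSum, weightedSum, ← sum_range_add_sum_Ico _ (min_le_right q n), hzero, add_zero]

theorem add_le_weightedSum {i j : ℕ} (hij : i < j) (hi : ω i = true) (hj : ω j = true) :
    S i + S j ≤ weightedSum S ω (j + 1) :=
  calc S i + S j = ∑ k ∈ {i, j}, (ω k).toNat * S k := by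
        rw [sum_pair hij.ne, hi, hj, Bool.toNat_true, one_mul, one_mul]
    _ ≤ weightedSum S ω (j + 1) :=
        sum_le_sum_of_subset (insert_subset_iff.mpr
          ⟨mem_range.mpr (by omega), singleton_subset_iff.mpr (self_mem_range_succ j)⟩)

variable {Q : ℕ → ℕ}

theorem gap_of_weightedSum_lt (hS : Monotone S) (hQ : ∀ k, S (k + 1) = S k + S (Q (k + 1)))
    (hω : ∀ j, weightedSum S ω (j + 1) < S (j + 1)) {j : ℕ} (hj : ω j = true) {i : ℕ}
    (hqi : Q (j + 1) ≤ i) (hij : i < j) : ω i = false := by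
  by_contra hi
  have hsum := add_le_weightedSum (S := S) hij (Bool.not_eq_false _ ▸ hi) hj
  have hq := hS hqi
  have := hQ j
  have := hω j
  omega

theorem weightedSum_lt_of_gap (hS : StrictMono S) (hS0 : 0 < S 0)
    (hQ : ∀ k, S (k + 1) = S k + S (Q (k + 1)))
    (hgap : ∀ j, ω j = true → ∀ i, Q (j + 1) ≤ i → i < j → ω i = false) :
    ∀ n, weightedSum S ω n < S n := by
  intro n
  induction n using Nat.strong_induction_on with
  | _ n ih =>
  match n with
  | 0 => simpa [weightedSum] using hS0
  | n + 1 =>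
    rw [weightedSum_succ]
    cases hn : ω n with
    | false =>
      have := ih n (Nat.lt_add_one n)
      have := hS (Nat.lt_add_one n)
      simp only [Bool.toNat_false, zero_mul, add_zero]
      omega
    | true =>
      have hlow : weightedSum S ω (min (Q (n + 1)) n) < S (Q (n + 1)) :=
        (ih _ (by omega)).trans_le (hS.monotone (min_le_left _ _))
      rw [weightedSum_eq_min_of_eq_false (hgap n hn), Bool.toNat_true, one_mul, hQ n]
      omega

end Kneading

open Kneading in
theorem stmt_3_general (S : ℕ → ℕ) (hS : StrictMono S) (hS0 : S 0 = 1)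
    (Q : ℕ → ℕ) (hQ : ∀ k, 1 ≤ k → S k = S (k - 1) + S (Q k)) :
    {ω : ℕ → Bool | ∀ j, ∑ i ∈ Finset.range (j + 1), (ω i).toNat * S i < S (j + 1)}
      = {ω : ℕ → Bool | ∀ j, ω j = true →
          ∀ i, Q (j + 1) ≤ i → i < j → ω i = false} := by
  have hQ' : ∀ k, S (k + 1) = S k + S (Q (k + 1)) := fun k => hQ (k + 1) (by omega)
  ext ω
  exact ⟨fun hω j hj i => gap_of_weightedSum_lt hS.monotone hQ' hω hj,
    fun hgap j => weightedSum_lt_of_gap hS (by omega) hQ' hgap (j + 1)⟩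

/-- Let `S : ℕ → ℕ` be strictly increasing with `S 0 = 1` and
`S (j+1) ≤ 2 * S j`, and suppose `Q : ℕ → ℕ` satisfies `S k = S (k-1) + S (Q k)` for all
`k ≥ 1` (the kneading map).  Then
`Ω = { ω : for every j, if ω j = 1 then ω i = 0 for all i with Q (j+1) ≤ i ≤ j-1 }`.
(The condition `Q (j+1) ≤ i ≤ j-1` is rendered as `Q (j+1) ≤ i` and `i < j`.) -/
theorem stmt_3 (S : ℕ → ℕ) (hS : StrictMono S) (hS0 : S 0 = 1)
    (hS2 : ∀ j, S (j + 1) ≤ 2 * S j)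
    (Q : ℕ → ℕ) (hQ : ∀ k, 1 ≤ k → S k = S (k - 1) + S (Q k)) :
    {ω : ℕ → Bool | ∀ j, ∑ i ∈ Finset.range (j + 1), (ω i).toNat * S i < S (j + 1)}
      = {ω : ℕ → Bool | ∀ j, ω j = true →
          ∀ i, Q (j + 1) ≤ i → i < j → ω i = false} :=
  stmt_3_general S hS hS0 Q hQ
end

section
/- Suppose Q : ℕ → ℕ satisfies S(k) = S(k−1) + S(Q(k)) for every k ≥ 1, and Q(k) → ∞ as k → ∞. Then there exists a unique continuous map T : Ω → Ω such that T(⟨n⟩) = ⟨n+1⟩ for every n ∈ ℕ. -/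
namespace Stmt4Aux

open Finset

/-- Partial sums of a 0/1 expansion. -/
def M (S : ℕ → ℕ) (ω : ℕ → Bool) (j : ℕ) : ℕ :=
  ∑ i ∈ Finset.range (j + 1), (ω i).toNat * S i

lemma M_succ (S : ℕ → ℕ) (ω : ℕ → Bool) (j : ℕ) :
    M S ω (j + 1) = M S ω j + (ω (j + 1)).toNat * S (j + 1) :=
  Finset.sum_range_succ _ _

lemma M_mono (S : ℕ → ℕ) (ω : ℕ → Bool) : Monotone (M S ω) := by
  intro a b hab
  exact Finset.sum_le_sum_of_subset (Finset.range_subset_range.2 (by omega))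

lemma M_agree {S : ℕ → ℕ} {ω ω' : ℕ → Bool} {j : ℕ} (h : ∀ t, t ≤ j → ω t = ω' t) :
    M S ω j = M S ω' j := by
  refine Finset.sum_congr rfl fun i hi => ?_
  rw [h i (by have := Finset.mem_range.mp hi; omega)]

section S

variable {S Q : ℕ → ℕ} (hS : StrictMono S) (hS0 : S 0 = 1)

include hS hS0

lemma Spos (j : ℕ) : 0 < S j := by have := hS.monotone (Nat.zero_le j); omega

lemma Sge (j : ℕ) : j + 1 ≤ S j := by
  induction j with
  | zero => omega
  | succ j ih => have h1 : S j < S (j + 1) := hS (by omega); omega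

lemma S1 (hS2 : ∀ j, S (j + 1) ≤ 2 * S j) : S 1 = 2 := by
  have h1 : S 0 < S 1 := hS (by omega)
  have h2 : S 1 ≤ 2 * S 0 := by simpa using hS2 0
  omega

end S

/-- Key carry lemma: a "full" level propagates down through `Q`. -/
lemma KL {S Q : ℕ → ℕ} (hS : StrictMono S) (hS0 : S 0 = 1)
    (hS2 : ∀ j, S (j + 1) ≤ 2 * S j)
    (hQ : ∀ k, 1 ≤ k → S k = S (k - 1) + S (Q k))
    {ω : ℕ → Bool} (hω : ∀ j, M S ω j < S (j + 1)) {j : ℕ}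
    (hfull : M S ω j + 1 = S (j + 1)) (hq : 1 ≤ Q (j + 1)) :
    Q (j + 1) - 1 < j ∧ M S ω (Q (j + 1) - 1) + 1 = S (Q (j + 1)) := by
  have hsum : S (j + 1) = S j + S (Q (j + 1)) := by simpa using hQ (j + 1) (by omega)
  set q := Q (j + 1) with hqdef
  have hqj : q ≤ j := by
    by_contra h
    have h1 : S j < S q := hS (by omega)
    have h2 := hS2 j
    omega
  have hj1 : 1 ≤ j := by
    rcases Nat.eq_zero_or_pos j with h | h
    · exfalso
      subst h
      have h2 : S 1 ≤ S q := hS.monotone hq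
      have h3 : 0 < S 1 := Spos hS hS0 1
      omega
    · exact h
  obtain ⟨j', rfl⟩ : ∃ j', j = j' + 1 := ⟨j - 1, by omega⟩
  have hstep := M_succ S ω j'
  have htrue : ω (j' + 1) = true := by
    cases h : ω (j' + 1) with
    | false =>
      exfalso
      rw [h] at hstep
      simp at hstep
      have h1 := hω j'
      have h2 : S (j' + 1) < S (j' + 1 + 1) := hS (by omega)
      omega
    | true => rfl
  rw [htrue] at hstep
  simp at hstep
  have hMj' : M S ω j' + 1 = S q := by omega
  refine ⟨by omega, ?_⟩
  have hsplit : (∑ i ∈ Finset.range q, (ω i).toNat * S i)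
      + ∑ i ∈ Finset.Ico q (j' + 1), (ω i).toNat * S i
      = ∑ i ∈ Finset.range (j' + 1), (ω i).toNat * S i := by
    simp only [Finset.range_eq_Ico]
    exact Finset.sum_Ico_consecutive _ (Nat.zero_le q) (by omega)
  have hMdef : M S ω j' = ∑ i ∈ Finset.range (j' + 1), (ω i).toNat * S i := rfl
  have hzero : ∀ i ∈ Finset.Ico q (j' + 1), (ω i).toNat * S i = 0 := by
    intro i hi
    cases h : ω i with
    | false => simp [h]
    | true =>
      exfalso
      have h1 : (ω i).toNat * S i ≤ ∑ i ∈ Finset.Ico q (j' + 1), (ω i).toNat * S i :=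
        Finset.single_le_sum (f := fun i => (ω i).toNat * S i) (fun i _ => Nat.zero_le _) hi
      have h2 : S q ≤ S i := hS.monotone (Finset.mem_Ico.mp hi).1
      rw [h] at h1
      simp at h1
      omega
  have hB : ∑ i ∈ Finset.Ico q (j' + 1), (ω i).toNat * S i = 0 :=
    Finset.sum_eq_zero hzero
  have hMq : M S ω (q - 1) = ∑ i ∈ Finset.range q, (ω i).toNat * S i := by
    have hq1 : q - 1 + 1 = q := by omega
    rw [M, hq1]
  omega

/-- If there are no full levels in `[l, N)` and `Q t ≥ l+1` for `t ≥ N`,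
then there are no full levels at all above `l`. -/
lemma noFull {S Q : ℕ → ℕ} (hS : StrictMono S) (hS0 : S 0 = 1)
    (hS2 : ∀ j, S (j + 1) ≤ 2 * S j)
    (hQ : ∀ k, 1 ≤ k → S k = S (k - 1) + S (Q k))
    {ω : ℕ → Bool} (hω : ∀ j, M S ω j < S (j + 1))
    {l N : ℕ} (hN : ∀ t, N ≤ t → l + 1 ≤ Q t)
    (hpre : ∀ t, l ≤ t → t < N → M S ω t + 1 ≠ S (t + 1)) :
    ∀ t, l ≤ t → M S ω t + 1 ≠ S (t + 1) := by
  classical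
  by_contra h
  push_neg at h
  obtain ⟨t₀, hlt₀, hft₀⟩ := h
  have hex : ∃ t, N ≤ t ∧ M S ω t + 1 = S (t + 1) := by
    refine ⟨t₀, ?_, hft₀⟩
    by_contra hc
    exact hpre t₀ hlt₀ (by omega) hft₀
  obtain ⟨htN, htf⟩ := Nat.find_spec hex
  set t := Nat.find hex with htdef
  have hq : l + 1 ≤ Q (t + 1) := hN (t + 1) (by omega)
  obtain ⟨hlt, hfq⟩ := KL hS hS0 hS2 hQ hω htf (by omega)
  have hfq' : M S ω (Q (t + 1) - 1) + 1 = S (Q (t + 1) - 1 + 1) := by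
    rw [show Q (t + 1) - 1 + 1 = Q (t + 1) from by omega]; exact hfq
  rcases lt_or_ge (Q (t + 1) - 1) N with hcase | hcase
  · exact hpre (Q (t + 1) - 1) (by omega) hcase hfq'
  · exact Nat.find_min hex hlt ⟨hcase, hfq'⟩


open Classical in
/-- The odometer ("add one") map on expansions. -/
noncomputable def T (S : ℕ → ℕ) (ω : ℕ → Bool) (i : ℕ) : Bool :=
  if (∀ j, i ≤ j → M S ω j + 1 ≠ S (j + 1)) then
    (if i = 0 then true else if M S ω (i - 1) + 1 = S i then true else ω i)
  else false

section Tchar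

variable {S : ℕ → ℕ} {ω : ℕ → Bool} {k : ℕ}

/-- `T` when there is a least `k` above which there is no full level. -/
lemma T_eq (hk : ∀ j, k ≤ j → M S ω j + 1 ≠ S (j + 1))
    (hk' : k = 0 ∨ M S ω (k - 1) + 1 = S k) (i : ℕ) :
    T S ω i = if i < k then false else if i = k then true else ω i := by
  classical
  unfold T
  rcases lt_trichotomy i k with h | h | h
  · rw [if_pos h, if_neg]
    push_neg
    refine ⟨k - 1, by omega, ?_⟩
    rcases hk' with h0 | hfull
    · omega
    · rw [show k - 1 + 1 = k from by omega]
      exact hfull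
  · subst h
    rw [if_pos hk, if_neg (lt_irrefl i), if_pos rfl]
    rcases hk' with h0 | hfull
    · rw [if_pos h0]
    · by_cases h0 : i = 0
      · rw [if_pos h0]
      · rw [if_neg h0, if_pos hfull]
  · have hki : ∀ j, i ≤ j → M S ω j + 1 ≠ S (j + 1) := fun j hj => hk j (by omega)
    have h1 : ¬ i < k := by omega
    have h2 : i ≠ k := by omega
    have h3 : ¬ i = 0 := by omega
    have h4 : ¬ (M S ω (i - 1) + 1 = S i) := by
      have h5 := hk (i - 1) (by omega)
      rw [show i - 1 + 1 = i from by omega] at h5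
      exact h5
    rw [if_pos hki, if_neg h3, if_neg h4, if_neg h1, if_neg h2]

lemma T_eq_false (h : ∀ i, ∃ j, i ≤ j ∧ M S ω j + 1 = S (j + 1)) (i : ℕ) :
    T S ω i = false := by
  classical
  unfold T
  rw [if_neg]
  push_neg
  obtain ⟨j, hj1, hj2⟩ := h i
  exact ⟨j, hj1, hj2⟩

end Tchar

section Tprops

variable {S : ℕ → ℕ} {ω : ℕ → Bool} {k : ℕ}

/-- At the least carry level `k`, the partial sum is exactly `S k - 1`. -/
lemma M_at_k (hS : StrictMono S) (hS0 : S 0 = 1) (hS2 : ∀ j, S (j + 1) ≤ 2 * S j)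
    (hω : ∀ j, M S ω j < S (j + 1))
    (hk : ∀ j, k ≤ j → M S ω j + 1 ≠ S (j + 1))
    (hk' : k = 0 ∨ M S ω (k - 1) + 1 = S k) :
    M S ω k + 1 = S k := by
  rcases hk' with h0 | hfull
  · subst h0
    have h1 : S 1 = 2 := S1 hS hS0 hS2
    have h2 : M S ω 0 = (ω 0).toNat := by simp [M, hS0]
    have h3 : M S ω 0 + 1 ≠ S 1 := by simpa using hk 0 (le_refl 0)
    have h4 : M S ω 0 < S 1 := by simpa using hω 0
    cases h : ω 0 with
    | false => rw [h] at h2; simp at h2; omega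
    | true => exfalso; rw [h] at h2; simp at h2; omega
  · rcases Nat.eq_zero_or_pos k with h0 | h0
    · subst h0
      simpa using hfull
    obtain ⟨k', rfl⟩ : ∃ k', k = k' + 1 := ⟨k - 1, by omega⟩
    simp only [Nat.add_sub_cancel] at hfull
    have hstep := M_succ S ω k'
    cases h : ω (k' + 1) with
    | false => rw [h] at hstep; simp at hstep; omega
    | true =>
      exfalso
      rw [h] at hstep; simp at hstep
      have h1 := hω (k' + 1)
      have h2 := hS2 (k' + 1)
      exact hk (k' + 1) (le_refl _) (by omega)

lemma M_T_lt (hk : ∀ j, k ≤ j → M S ω j + 1 ≠ S (j + 1))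
    (hk' : k = 0 ∨ M S ω (k - 1) + 1 = S k) {j : ℕ} (hj : j < k) :
    M S (T S ω) j = 0 := by
  refine Finset.sum_eq_zero fun i hi => ?_
  have hik : i < k := by have := Finset.mem_range.mp hi; omega
  rw [T_eq hk hk' i, if_pos hik]
  simp

lemma M_T_ge (hS : StrictMono S) (hS0 : S 0 = 1) (hS2 : ∀ j, S (j + 1) ≤ 2 * S j)
    (hω : ∀ j, M S ω j < S (j + 1))
    (hk : ∀ j, k ≤ j → M S ω j + 1 ≠ S (j + 1))
    (hk' : k = 0 ∨ M S ω (k - 1) + 1 = S k) {j : ℕ} (hj : k ≤ j) :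
    M S (T S ω) j = M S ω j + 1 := by
  have hMk : M S ω k + 1 = S k := M_at_k hS hS0 hS2 hω hk hk'
  have hA : ∑ i ∈ Finset.range (k + 1), (T S ω i).toNat * S i = S k := by
    rw [Finset.sum_range_succ]
    rw [show (∑ i ∈ Finset.range k, (T S ω i).toNat * S i) = 0 from
      Finset.sum_eq_zero fun i hi => by
        rw [T_eq hk hk' i, if_pos (Finset.mem_range.mp hi)]; simp]
    rw [T_eq hk hk' k, if_neg (lt_irrefl k), if_pos rfl]
    simp
  have hTB : ∀ i ∈ Finset.Ico (k + 1) (j + 1), (T S ω i).toNat * S i = (ω i).toNat * S i := by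
    intro i hi
    have h1 : k < i := (Finset.mem_Ico.mp hi).1
    rw [T_eq hk hk' i, if_neg (by omega), if_neg (by omega)]
  have hsplitT : (∑ i ∈ Finset.range (k + 1), (T S ω i).toNat * S i)
      + ∑ i ∈ Finset.Ico (k + 1) (j + 1), (T S ω i).toNat * S i
      = M S (T S ω) j := by
    simp only [M, Finset.range_eq_Ico]
    exact Finset.sum_Ico_consecutive _ (Nat.zero_le _) (by omega)
  have hsplitW : (∑ i ∈ Finset.range (k + 1), (ω i).toNat * S i)
      + ∑ i ∈ Finset.Ico (k + 1) (j + 1), (ω i).toNat * S i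
      = M S ω j := by
    simp only [M, Finset.range_eq_Ico]
    exact Finset.sum_Ico_consecutive _ (Nat.zero_le _) (by omega)
  have hBeq : ∑ i ∈ Finset.Ico (k + 1) (j + 1), (T S ω i).toNat * S i
      = ∑ i ∈ Finset.Ico (k + 1) (j + 1), (ω i).toNat * S i :=
    Finset.sum_congr rfl hTB
  have hMkdef : M S ω k = ∑ i ∈ Finset.range (k + 1), (ω i).toNat * S i := rfl
  omega

/-- The odometer maps Ω to Ω. -/
lemma T_mem (hS : StrictMono S) (hS0 : S 0 = 1) (hS2 : ∀ j, S (j + 1) ≤ 2 * S j)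
    (hω : ∀ j, M S ω j < S (j + 1)) :
    ∀ j, M S (T S ω) j < S (j + 1) := by
  classical
  intro j
  by_cases hex : ∃ k, ∀ j, k ≤ j → M S ω j + 1 ≠ S (j + 1)
  · set k := Nat.find hex with hkdef
    have hk : ∀ j, k ≤ j → M S ω j + 1 ≠ S (j + 1) := Nat.find_spec hex
    have hk' : k = 0 ∨ M S ω (k - 1) + 1 = S k := by
      rcases Nat.eq_zero_or_pos k with h0 | h0
      · exact Or.inl h0
      · right
        have hmin := Nat.find_min hex (show k - 1 < k from by omega)
        push_neg at hmin
        obtain ⟨t, ht1, ht2⟩ := hmin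
        have htk : t = k - 1 := by
          by_contra hne
          exact hk t (by omega) ht2
        subst htk
        rwa [show k - 1 + 1 = k from by omega] at ht2
    rcases lt_or_ge j k with hj | hj
    · rw [M_T_lt hk hk' hj]
      exact Spos hS hS0 (j + 1)
    · rw [M_T_ge hS hS0 hS2 hω hk hk' hj]
      have h1 := hω j
      have h2 := hk j hj
      omega
  · push_neg at hex
    have hall : ∀ i, ∃ j, i ≤ j ∧ M S ω j + 1 = S (j + 1) := by
      intro i
      obtain ⟨j, hj1, hj2⟩ := hex i
      exact ⟨j, hj1, hj2⟩
    have : M S (T S ω) j = 0 := Finset.sum_eq_zero fun i _ => by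
      rw [T_eq_false hall i]; simp
    rw [this]
    exact Spos hS hS0 (j + 1)

end Tprops


/-- Uniqueness of digits, range version. -/
lemma rep_unique_range {S : ℕ → ℕ} (hS : StrictMono S) (hS0 : S 0 = 1) :
    ∀ (J : ℕ) (d e : ℕ → Bool),
      (∀ j, M S d j < S (j + 1)) → (∀ j, M S e j < S (j + 1)) →
      (∑ i ∈ Finset.range J, (d i).toNat * S i) = (∑ i ∈ Finset.range J, (e i).toNat * S i) →
      ∀ i, i < J → d i = e i := by
  intro J
  induction J with
  | zero => intro d e _ _ _ i hi; omega
  | succ J ih =>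
    intro d e hd he hsum i hi
    have hdJ : (∑ i ∈ Finset.range J, (d i).toNat * S i) < S J := by
      cases J with
      | zero => simpa [hS0] using Nat.zero_lt_one
      | succ J' => exact hd J'
    have heJ : (∑ i ∈ Finset.range J, (e i).toNat * S i) < S J := by
      cases J with
      | zero => simpa [hS0] using Nat.zero_lt_one
      | succ J' => exact he J'
    rw [Finset.sum_range_succ, Finset.sum_range_succ] at hsum
    have htop : d J = e J := by
      cases hdj : d J <;> cases hej : e J <;> rw [hdj, hej] at hsum <;> simp at hsum <;>
        first
          | rfl
          | omega
    rw [htop] at hsum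
    have hsum' : (∑ i ∈ Finset.range J, (d i).toNat * S i)
        = ∑ i ∈ Finset.range J, (e i).toNat * S i := by omega
    rcases Nat.lt_or_ge i J with h | h
    · exact ih d e hd he hsum' i h
    · have : i = J := by omega
      rw [this, htop]

/-- Uniqueness of finitely supported representations. -/
lemma rep_unique {S : ℕ → ℕ} (hS : StrictMono S) (hS0 : S 0 = 1) {d e : ℕ → Bool}
    (hdf : {j | d j = true}.Finite) (hef : {j | e j = true}.Finite)
    (hd : ∀ j, M S d j < S (j + 1)) (he : ∀ j, M S e j < S (j + 1))
    (hsum : ∑ᶠ j, (d j).toNat * S j = ∑ᶠ j, (e j).toNat * S j) : d = e := by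
  obtain ⟨Jd, hJd⟩ := hdf.bddAbove
  obtain ⟨Je, hJe⟩ := hef.bddAbove
  set J := max Jd Je + 1 with hJ
  have hsupd : Function.support (fun j => (d j).toNat * S j) ⊆ ↑(Finset.range J) := by
    intro j hj
    simp only [Function.mem_support] at hj
    have : d j = true := by
      cases h : d j with
      | false => rw [h] at hj; simp at hj
      | true => rfl
    have := hJd this
    simp only [Finset.coe_range, Set.mem_Iio]
    omega
  have hsupe : Function.support (fun j => (e j).toNat * S j) ⊆ ↑(Finset.range J) := by
    intro j hj
    simp only [Function.mem_support] at hj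
    have : e j = true := by
      cases h : e j with
      | false => rw [h] at hj; simp at hj
      | true => rfl
    have := hJe this
    simp only [Finset.coe_range, Set.mem_Iio]
    omega
  rw [finsum_eq_finset_sum_of_support_subset _ hsupd,
    finsum_eq_finset_sum_of_support_subset _ hsupe] at hsum
  funext i
  rcases Nat.lt_or_ge i J with h | h
  · exact rep_unique_range hS hS0 J d e hd he hsum i h
  · have h1 : d i = false := by
      cases hh : d i
      · rfl
      · have := hJd hh; omega
    have h2 : e i = false := by
      cases hh : e i
      · rfl
      · have := hJe hh; omega
    rw [h1, h2]

/-- Local constancy of the odometer. -/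
lemma T_local {S Q : ℕ → ℕ} (hS : StrictMono S) (hS0 : S 0 = 1)
    (hS2 : ∀ j, S (j + 1) ≤ 2 * S j)
    (hQ : ∀ k, 1 ≤ k → S k = S (k - 1) + S (Q k))
    {ω ω' : ℕ → Bool} (hω : ∀ j, M S ω j < S (j + 1)) (hω' : ∀ j, M S ω' j < S (j + 1))
    {i N : ℕ} (hN : ∀ t, N ≤ t → i + 2 ≤ Q t) (hiN : i < N)
    (hagree : ∀ t, t < N → ω t = ω' t) :
    T S ω i = T S ω' i := by
  classical
  have hMagree : ∀ t, t < N → M S ω t = M S ω' t := fun t ht =>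
    M_agree fun u hu => hagree u (by omega)
  have hdir : ∀ (a b : ℕ → Bool), (∀ j, M S b j < S (j + 1)) →
      (∀ t, t < N → M S a t = M S b t) →
      (∀ j, i ≤ j → M S a j + 1 ≠ S (j + 1)) →
      (∀ j, i ≤ j → M S b j + 1 ≠ S (j + 1)) := by
    intro a b hb hab hPa
    refine noFull (l := i) (N := N) hS hS0 hS2 hQ hb
      (fun t ht => by have := hN t ht; omega) ?_
    intro t ht1 ht2
    rw [← hab t ht2]
    exact hPa t ht1
  have hPiff : (∀ j, i ≤ j → M S ω j + 1 ≠ S (j + 1))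
      ↔ (∀ j, i ≤ j → M S ω' j + 1 ≠ S (j + 1)) :=
    ⟨hdir ω ω' hω' hMagree, hdir ω' ω hω (fun t ht => (hMagree t ht).symm)⟩
  unfold T
  by_cases hP : ∀ j, i ≤ j → M S ω j + 1 ≠ S (j + 1)
  · rw [if_pos hP, if_pos (hPiff.mp hP)]
    by_cases h0 : i = 0
    · rw [if_pos h0, if_pos h0]
    · rw [if_neg h0, if_neg h0, hMagree (i - 1) (by omega), hagree i hiN]
  · rw [if_neg hP, if_neg (fun h => hP (hPiff.mpr h))]


lemma least_k {S : ℕ → ℕ} {ω : ℕ → Bool}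
    (hex : ∃ k, ∀ j, k ≤ j → M S ω j + 1 ≠ S (j + 1)) :
    ∃ k, (∀ j, k ≤ j → M S ω j + 1 ≠ S (j + 1)) ∧ (k = 0 ∨ M S ω (k - 1) + 1 = S k) := by
  classical
  set k := Nat.find hex with hkdef
  have hk : ∀ j, k ≤ j → M S ω j + 1 ≠ S (j + 1) := Nat.find_spec hex
  refine ⟨k, hk, ?_⟩
  rcases Nat.eq_zero_or_pos k with h0 | h0
  · exact Or.inl h0
  · right
    have hmin := Nat.find_min hex (show k - 1 < k from by omega)
    push_neg at hmin
    obtain ⟨t, ht1, ht2⟩ := hmin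
    have htk : t = k - 1 := by
      by_contra hne
      exact hk t (by omega) ht2
    subst htk
    rwa [show k - 1 + 1 = k from by omega] at ht2

lemma M_stable {S : ℕ → ℕ} {d : ℕ → Bool} {J j : ℕ}
    (hbd : ∀ t, d t = true → t < J) (hj : J ≤ j + 1) :
    M S d j = ∑ i ∈ Finset.range J, (d i).toNat * S i := by
  refine (Finset.sum_subset (Finset.range_subset_range.2 hj) fun x _ hx => ?_).symm
  have hxf : d x = false := by
    cases h : d x with
    | false => rfl
    | true => exact absurd (Finset.mem_range.2 (hbd x h)) hx
  rw [hxf]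
  simp

lemma finsum_eq_range {S : ℕ → ℕ} {d : ℕ → Bool} {J : ℕ}
    (hbd : ∀ t, d t = true → t < J) :
    ∑ᶠ t, (d t).toNat * S t = ∑ i ∈ Finset.range J, (d i).toNat * S i := by
  refine finsum_eq_finset_sum_of_support_subset _ ?_
  intro t ht
  simp only [Function.mem_support] at ht
  have : d t = true := by
    cases h : d t with
    | false => rw [h] at ht; simp at ht
    | true => rfl
  simpa using hbd t this

/-- The odometer sends the representation of `n` to the representation of `n + 1`. -/
lemma T_succ_rep {S : ℕ → ℕ} (hS : StrictMono S) (hS0 : S 0 = 1)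
    (hS2 : ∀ j, S (j + 1) ≤ 2 * S j) {d e : ℕ → Bool} {n : ℕ}
    (hdf : {j | d j = true}.Finite) (hdsum : ∑ᶠ j, (d j).toNat * S j = n)
    (hd : ∀ j, M S d j < S (j + 1))
    (hef : {j | e j = true}.Finite) (hesum : ∑ᶠ j, (e j).toNat * S j = n + 1)
    (he : ∀ j, M S e j < S (j + 1)) :
    T S d = e := by
  classical
  obtain ⟨Jd, hJd⟩ := hdf.bddAbove
  have hbd : ∀ t, d t = true → t < Jd + 1 := fun t ht => by
    have := hJd ht; omega
  have hMn : ∀ j, Jd ≤ j → M S d j = n := by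
    intro j hj
    rw [M_stable hbd (by omega), ← finsum_eq_range hbd, hdsum]
  have hMle : ∀ j, M S d j ≤ n := by
    intro j
    calc M S d j ≤ M S d (max j Jd) := M_mono S d (le_max_left _ _)
    _ = n := hMn _ (le_max_right _ _)
  have hex : ∃ k, ∀ j, k ≤ j → M S d j + 1 ≠ S (j + 1) := by
    refine ⟨n + 1, fun j hj => ?_⟩
    have h1 := Sge hS hS0 (j + 1)
    have h2 := hMle j
    omega
  obtain ⟨k, hk, hk'⟩ := least_k hex
  have hTf : {i | T S d i = true}.Finite := by
    refine Set.Finite.subset ((Set.finite_Iic k).union hdf) ?_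
    intro i hi
    simp only [Set.mem_setOf_eq] at hi
    rcases Nat.lt_or_ge k i with h | h
    · right
      rw [T_eq hk hk' i, if_neg (by omega), if_neg (by omega)] at hi
      exact hi
    · left
      simpa using h
  have hTbd : ∀ t, T S d t = true → t < max k Jd + 1 := by
    intro t ht
    rcases Nat.lt_or_ge k t with h | h
    · rw [T_eq hk hk' t, if_neg (by omega), if_neg (by omega)] at ht
      have := hbd t ht
      omega
    · omega
  have hTsum : ∑ᶠ t, (T S d t).toNat * S t = n + 1 := by
    rw [finsum_eq_range hTbd]
    have h1 : M S (T S d) (max k Jd) = ∑ i ∈ Finset.range (max k Jd + 1), (T S d i).toNat * S i := rfl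
    rw [← h1, M_T_ge hS hS0 hS2 hd hk hk' (le_max_left _ _), hMn _ (le_max_right _ _)]
  exact rep_unique hS hS0 hTf hef (T_mem hS hS0 hS2 hd) he (hTsum.trans hesum.symm)

/-- Truncations of elements of Ω are representations of their partial sums. -/
lemma trunc_rep {S : ℕ → ℕ} (hS : StrictMono S) (hS0 : S 0 = 1)
    {ω : ℕ → Bool} (hω : ∀ j, M S ω j < S (j + 1)) (N : ℕ)
    {e : ℕ → Bool} (hef : {j | e j = true}.Finite)
    (hesum : ∑ᶠ j, (e j).toNat * S j = M S ω N)
    (he : ∀ j, M S e j < S (j + 1)) :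
    e = fun t => if t ≤ N then ω t else false := by
  classical
  set tr : ℕ → Bool := fun t => if t ≤ N then ω t else false with htr
  have htrbd : ∀ t, tr t = true → t < N + 1 := by
    intro t ht
    by_contra h
    have : tr t = false := if_neg (by omega)
    rw [this] at ht
    exact Bool.false_ne_true ht
  have htrf : {j | tr j = true}.Finite :=
    Set.Finite.subset (Set.finite_Iic N) fun t ht => by
      have := htrbd t ht; simp; omega
  have htragree : ∀ t, t ≤ N → tr t = ω t := fun t ht => if_pos ht
  have htrM : ∀ j, j ≤ N → M S tr j = M S ω j := fun j hj =>
    M_agree fun t ht => (htragree t (by omega))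
  have htrpre : ∀ j, M S tr j < S (j + 1) := by
    intro j
    rcases le_or_gt j N with h | h
    · rw [htrM j h]; exact hω j
    · have h1 : M S tr j = M S ω N := by
        rw [M_stable htrbd (by omega), ← htrM N (le_refl N)]
        rfl
      rw [h1]
      exact lt_of_lt_of_le (hω N) (hS.monotone (by omega))
  have htrsum : ∑ᶠ t, (tr t).toNat * S t = M S ω N := by
    rw [finsum_eq_range htrbd, ← htrM N (le_refl N)]
    rfl
  exact rep_unique hS hS0 hef htrf he htrpre (hesum.trans htrsum.symm)

end Stmt4Aux


open Stmt4Aux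

/-- Let `S : ℕ → ℕ` be strictly increasing with `S 0 = 1` and
`S (j+1) ≤ 2 * S j`, suppose `Q : ℕ → ℕ` satisfies `S k = S (k-1) + S (Q k)` for `k ≥ 1`
and `Q k → ∞`.  With `Ω ⊆ {0,1}^ℕ` (product topology) as before and `⟨n⟩ = angle n` the
unique finitely supported element of `Ω` representing `n`, there exists a unique
continuous map `T : Ω → Ω` such that `T ⟨n⟩ = ⟨n+1⟩` for every `n ∈ ℕ`. -/
theorem stmt_4 (S : ℕ → ℕ) (hS : StrictMono S) (hS0 : S 0 = 1)
    (hS2 : ∀ j, S (j + 1) ≤ 2 * S j)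
    (Q : ℕ → ℕ) (hQ : ∀ k, 1 ≤ k → S k = S (k - 1) + S (Q k))
    (hQtop : Filter.Tendsto Q Filter.atTop Filter.atTop)
    (angle : ℕ → (ℕ → Bool))
    (hangle : ∀ n, {j | angle n j = true}.Finite ∧
      (∑ᶠ j, (angle n j).toNat * S j = n) ∧
      ∀ j, ∑ i ∈ Finset.range (j + 1), (angle n i).toNat * S i < S (j + 1)) :
    ∃! T : {ω : ℕ → Bool // ∀ j, ∑ i ∈ Finset.range (j + 1), (ω i).toNat * S i < S (j + 1)}
         → {ω : ℕ → Bool // ∀ j, ∑ i ∈ Finset.range (j + 1), (ω i).toNat * S i < S (j + 1)},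
      Continuous T ∧
      ∀ n : ℕ, (T ⟨angle n, (hangle n).2.2⟩).val = angle (n + 1) := by
  classical
  have hcont : Continuous (fun ω : {ω : ℕ → Bool // ∀ j,
        ∑ i ∈ Finset.range (j + 1), (ω i).toNat * S i < S (j + 1)} =>
      (⟨Stmt4Aux.T S ω.1, T_mem hS hS0 hS2 ω.2⟩ :
        {ω : ℕ → Bool // ∀ j, ∑ i ∈ Finset.range (j + 1), (ω i).toNat * S i < S (j + 1)})) := by
    apply Continuous.subtype_mk
    apply continuous_pi
    intro i
    obtain ⟨N₀, hN₀⟩ := Filter.eventually_atTop.mp (hQtop.eventually_ge_atTop (i + 2))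
    set N := max N₀ (i + 1) with hNdef
    apply IsLocallyConstant.continuous
    rw [IsLocallyConstant.iff_exists_open]
    intro x
    refine ⟨{y | ∀ t, t < N → y.1 t = x.1 t}, ?_, fun t _ => rfl, ?_⟩
    · have heq : {y : {ω : ℕ → Bool // ∀ j,
            ∑ i ∈ Finset.range (j + 1), (ω i).toNat * S i < S (j + 1)} |
            ∀ t, t < N → y.1 t = x.1 t}
          = Subtype.val ⁻¹' (Set.pi (Set.Iio N) fun t => {x.1 t}) := by
        ext y
        simp [Set.mem_pi]
      rw [heq]
      exact ((isOpen_set_pi (Set.finite_Iio N) fun t _ => isOpen_discrete _)).preimage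
        continuous_subtype_val
    · intro y hy
      exact T_local hS hS0 hS2 hQ y.2 x.2
        (fun t ht => hN₀ t (le_trans (le_max_left _ _) ht)) (by omega) hy
  have hspec : ∀ n : ℕ, Stmt4Aux.T S (angle n) = angle (n + 1) := by
    intro n
    exact T_succ_rep hS hS0 hS2 (hangle n).1 (hangle n).2.1 (hangle n).2.2
      (hangle (n + 1)).1 (hangle (n + 1)).2.1 (hangle (n + 1)).2.2
  have hdense : Dense (Set.range (fun n : ℕ =>
      (⟨angle n, (hangle n).2.2⟩ : {ω : ℕ → Bool // ∀ j,
        ∑ i ∈ Finset.range (j + 1), (ω i).toNat * S i < S (j + 1)}))) := by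
    intro x
    have htend : Filter.Tendsto (fun N : ℕ =>
        (⟨angle (M S x.1 N), (hangle _).2.2⟩ : {ω : ℕ → Bool // ∀ j,
          ∑ i ∈ Finset.range (j + 1), (ω i).toNat * S i < S (j + 1)}))
        Filter.atTop (nhds x) := by
      rw [tendsto_subtype_rng]
      rw [tendsto_pi_nhds]
      intro i
      have hEq : (fun _ : ℕ => x.1 i) =ᶠ[Filter.atTop]
          (fun N : ℕ => angle (M S x.1 N) i) := by
        refine Filter.eventuallyEq_of_mem (Filter.mem_atTop i) fun N hN => ?_
        replace hN : i ≤ N := hN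
        have := trunc_rep hS hS0 x.2 N (hangle (M S x.1 N)).1
          (hangle (M S x.1 N)).2.1 (hangle (M S x.1 N)).2.2
        rw [this]
        simp [hN]
      exact Filter.Tendsto.congr' hEq tendsto_const_nhds
    exact mem_closure_of_tendsto htend
      (Filter.Eventually.of_forall fun N => Set.mem_range_self _)
  refine ⟨_, ⟨hcont, fun n => hspec n⟩, ?_⟩
  rintro T' ⟨hc', hs'⟩
  refine Continuous.ext_on hdense hc' hcont ?_
  rintro x ⟨n, rfl⟩
  apply Subtype.ext
  rw [hs' n]
  exact (hspec n).symm
end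

section
/- The sequence S is well defined and strictly increasing, S(0) = 1, S(j+1) ≤ 2·S(j) for all j ≥ 0, S(r(k)) = q(k) for all k ≥ 1, and there exists Q : ℕ → ℕ with S(k) = S(k−1) + S(Q(k)) for all k ≥ 1 and Q(k) → ∞ as k → ∞. -/
/-- Block index: largest `m ≤ n` with `b m ≤ n`. -/
def Kfun (b : ℕ → ℕ) (n : ℕ) : ℕ := Nat.findGreatest (fun m => b m ≤ n) n

/-- The sequence `S`. -/
def Sfun (b q : ℕ → ℕ) (n : ℕ) : ℕ :=
  if n < b 0 then n + 1 else (n - b (Kfun b n) + 1) * q (Kfun b n + 1)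

/-- The kneading map. -/
def Qfun (b : ℕ → ℕ) (n : ℕ) : ℕ :=
  if n ≤ b 0 then 0
  else if b (Kfun b n) < n then b (Kfun b n)
  else if 2 ≤ Kfun b n then b (Kfun b n - 2) else 0

lemma Kfun_spec {b : ℕ → ℕ} (hb : StrictMono b) {n : ℕ} (hn : b 0 ≤ n) :
    b (Kfun b n) ≤ n ∧ n < b (Kfun b n + 1) := by
  constructor
  · exact Nat.findGreatest_spec (P := fun m => b m ≤ n) (m := 0) (Nat.zero_le n) hn
  · by_contra h
    push_neg at h
    have h1 : Kfun b n + 1 ≤ n := le_trans (hb.le_apply) h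
    exact Nat.findGreatest_is_greatest (Nat.lt_succ_self _) h1 h

lemma Kfun_eq {b : ℕ → ℕ} (hb : StrictMono b) {n m : ℕ}
    (h1 : b m ≤ n) (h2 : n < b (m + 1)) : Kfun b n = m := by
  have hn : b 0 ≤ n := le_trans (hb.monotone (Nat.zero_le m)) h1
  obtain ⟨hK1, hK2⟩ := Kfun_spec hb hn
  have hle : Kfun b n ≤ m := by
    have := lt_of_le_of_lt hK1 h2
    exact Nat.lt_succ_iff.mp (hb.lt_iff_lt.mp this)
  have hge : m ≤ Kfun b n := by
    have := lt_of_le_of_lt h1 hK2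
    exact Nat.lt_succ_iff.mp (hb.lt_iff_lt.mp this)
  omega

lemma Sfun_eval {b : ℕ → ℕ} (q : ℕ → ℕ) (hb : StrictMono b) {m j : ℕ}
    (hj : b m + j < b (m + 1)) : Sfun b q (b m + j) = (j + 1) * q (m + 1) := by
  have hb0 : b 0 ≤ b m + j := le_trans (hb.monotone (Nat.zero_le m)) (Nat.le_add_right _ _)
  have hK : Kfun b (b m + j) = m := Kfun_eq hb (Nat.le_add_right _ _) hj
  unfold Sfun
  rw [if_neg (by omega), hK]
  congr 1
  omega

/-- Let `a : ℕ → ℕ` with `a k ≥ 1` for `k ≥ 1`, let `q` satisfy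
`q 0 = 1`, `q 1 = a 1`, `q (k+1) = a (k+1) * q k + q (k-1)`, and let `r` satisfy
`r 1 = q 1 - 1`, `r (k+1) = r k + a (k+1)`.  Then the sequence `S` given by
`S j = j + 1` for `0 ≤ j ≤ r 1` and `S (r k + j) = (j+1) * q k` for `k ≥ 1`,
`0 ≤ j < a (k+1)` is well defined (i.e. such an `S` exists), is strictly increasing,
has `S 0 = 1`, `S (j+1) ≤ 2 * S j` for all `j`, `S (r k) = q k` for all `k ≥ 1`, and
admits a kneading map `Q : ℕ → ℕ` with `S k = S (k-1) + S (Q k)` for all `k ≥ 1` and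
`Q k → ∞`. -/
theorem stmt_5 (a : ℕ → ℕ) (ha : ∀ k, 1 ≤ k → 1 ≤ a k)
    (q : ℕ → ℕ) (hq0 : q 0 = 1) (hq1 : q 1 = a 1)
    (hq : ∀ k, 1 ≤ k → q (k + 1) = a (k + 1) * q k + q (k - 1))
    (r : ℕ → ℕ) (hr1 : r 1 = q 1 - 1)
    (hr : ∀ k, 1 ≤ k → r (k + 1) = r k + a (k + 1)) :
    ∃ S : ℕ → ℕ,
      (∀ j, j ≤ r 1 → S j = j + 1) ∧
      (∀ k, 1 ≤ k → ∀ j, j < a (k + 1) → S (r k + j) = (j + 1) * q k) ∧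
      StrictMono S ∧
      S 0 = 1 ∧
      (∀ j, S (j + 1) ≤ 2 * S j) ∧
      (∀ k, 1 ≤ k → S (r k) = q k) ∧
      ∃ Q : ℕ → ℕ,
        (∀ k, 1 ≤ k → S k = S (k - 1) + S (Q k)) ∧
        Filter.Tendsto Q Filter.atTop Filter.atTop := by
  -- positivity and monotonicity of q
  have hqpos : ∀ k, 1 ≤ q k := by
    intro k
    induction k using Nat.strong_induction_on with
    | _ k ih =>
      match k with
      | 0 => omega
      | 1 => rw [hq1]; exact ha 1 le_rfl
      | (k+2) =>
        have h := hq (k+1) (by omega)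
        simp only [Nat.add_sub_cancel] at h
        have h2 := ih k (by omega)
        have : q k ≤ q (k+2) := by rw [h]; exact Nat.le_add_left _ _
        omega
  have hqmono : ∀ k, q k ≤ q (k + 1) := by
    intro k
    match k with
    | 0 => rw [hq0, hq1]; exact ha 1 le_rfl
    | (m+1) =>
      have h := hq (m+1) (by omega)
      simp only [Nat.add_sub_cancel] at h
      have ha2 := ha (m+2) (by omega)
      rw [show m+1+1 = m+2 from rfl] at h ⊢
      have : q (m+1) ≤ a (m+2) * q (m+1) := Nat.le_mul_of_pos_left _ (by omega)
      omega
  set b : ℕ → ℕ := fun m => r (m + 1) with hbdef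
  have hb0 : b 0 + 1 = a 1 := by
    have := ha 1 le_rfl
    simp only [hbdef, hr1, hq1]; omega
  have hbs : ∀ m, b (m + 1) = b m + a (m + 2) := by
    intro m
    simp only [hbdef]
    exact hr (m + 1) (by omega)
  have hbmono : StrictMono b := by
    apply strictMono_nat_of_lt_succ
    intro m
    have := hbs m
    have := ha (m + 2) (by omega)
    omega
  -- value lemma in terms of a-bound
  have hSval : ∀ m j, j < a (m + 2) → Sfun b q (b m + j) = (j + 1) * q (m + 1) := by
    intro m j hj
    exact Sfun_eval q hbmono (by rw [hbs m]; omega)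
  -- conjunct 1
  have hC1 : ∀ j, j ≤ r 1 → Sfun b q j = j + 1 := by
    intro j hj
    have hj' : j ≤ b 0 := hj
    rcases lt_or_eq_of_le hj' with h | h
    · unfold Sfun; rw [if_pos h]
    · subst h
      have h' : Sfun b q (b 0) = q 1 := by simpa using hSval 0 0 (ha 2 (by omega))
      rw [h', hq1]
      omega
  -- conjunct 2
  have hC2 : ∀ k, 1 ≤ k → ∀ j, j < a (k + 1) → Sfun b q (r k + j) = (j + 1) * q k := by
    intro k hk j hj
    obtain ⟨m, rfl⟩ : ∃ m, k = m + 1 := ⟨k - 1, by omega⟩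
    have : r (m + 1) = b m := rfl
    rw [this]
    exact hSval m j hj
  have hSb : ∀ m, Sfun b q (b m) = q (m + 1) := by
    intro m
    have h := hSval m 0 (ha (m + 2) (by omega))
    rw [Nat.add_zero, Nat.zero_add, one_mul] at h
    exact h
  -- S at r k
  have hC6 : ∀ k, 1 ≤ k → Sfun b q (r k) = q k := by
    intro k hk
    have := hC2 k hk 0 (ha (k + 1) (by omega))
    simpa using this
  -- step lemma
  have hstep : ∀ n, Sfun b q n < Sfun b q (n + 1) ∧ Sfun b q (n + 1) ≤ 2 * Sfun b q n := by
    intro n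
    by_cases hn : n + 1 ≤ b 0
    · rw [hC1 n (by omega), hC1 (n+1) (by omega)]
      omega
    · -- n ≥ b 0
      have hbn : b 0 ≤ n := by omega
      obtain ⟨hK1, hK2⟩ := Kfun_spec hbmono hbn
      set m := Kfun b n with hm
      obtain ⟨j, hnj⟩ : ∃ j, n = b m + j := ⟨n - b m, by omega⟩
      have hja : j < a (m + 2) := by have := hbs m; omega
      have hSn : Sfun b q n = (j + 1) * q (m + 1) := by rw [hnj]; exact hSval m j hja
      by_cases h2 : n + 1 < b (m + 1)
      · have hja' : j + 1 < a (m + 2) := by have := hbs m; omega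
        have hSn1 : Sfun b q (n + 1) = (j + 2) * q (m + 1) := by
          have := hSval m (j + 1) hja'
          rw [hnj, Nat.add_assoc]
          exact this
        have hqp := hqpos (m + 1)
        constructor
        · rw [hSn, hSn1]; exact mul_lt_mul_of_pos_right (by omega) (by omega)
        · rw [hSn, hSn1]; nlinarith
      · -- n + 1 = b (m+1)
        have heq : n + 1 = b (m + 1) := by omega
        have hja'' : j + 1 = a (m + 2) := by have := hbs m; omega
        have hSn1 : Sfun b q (n + 1) = q (m + 2) := by
          rw [heq]; exact hSb (m + 1)
        have hqe := hq (m + 1) (by omega)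
        simp only [Nat.add_sub_cancel] at hqe
        rw [show m+1+1 = m+2 from rfl] at hqe
        have hqp := hqpos m
        have hqm := hqmono m
        rw [hSn, hSn1, hqe, hja'']
        have h3 : q (m + 1) ≤ a (m + 2) * q (m + 1) :=
          Nat.le_mul_of_pos_left _ (by have := ha (m + 2) (by omega); omega)
        constructor
        · omega
        · omega
  have hmono : StrictMono (Sfun b q) := strictMono_nat_of_lt_succ (fun n => (hstep n).1)
  -- kneading map
  refine ⟨Sfun b q, hC1, hC2, hmono, hC1 0 (Nat.zero_le _), fun j => (hstep j).2, hC6, Qfun b, ?_, ?_⟩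
  · intro n hn
    unfold Qfun
    by_cases h1 : n ≤ b 0
    · rw [if_pos h1, hC1 n h1, hC1 (n - 1) (by omega), hC1 0 (Nat.zero_le _)]
      omega
    · rw [if_neg h1]
      have hbn : b 0 ≤ n := by omega
      obtain ⟨hK1, hK2⟩ := Kfun_spec hbmono hbn
      obtain ⟨m, hmeq⟩ : ∃ m, Kfun b n = m := ⟨_, rfl⟩
      rw [hmeq] at hK1 hK2 ⊢
      by_cases h2 : b m < n
      · rw [if_pos h2]
        obtain ⟨j, hnj⟩ : ∃ j, n = b m + (j + 1) := ⟨n - b m - 1, by omega⟩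
        have hja : j + 1 < a (m + 2) := by have := hbs m; omega
        have hSn : Sfun b q n = (j + 2) * q (m + 1) := by rw [hnj]; exact hSval m (j+1) hja
        have hSn1 : Sfun b q (n - 1) = (j + 1) * q (m + 1) := by
          have : n - 1 = b m + j := by omega
          rw [this]; exact hSval m j (by omega)
        rw [hSn, hSn1, hSb m]; ring
      · -- n = b m, m ≥ 1
        rw [if_neg h2]
        have hne : n = b m := by omega
        have hm1 : 1 ≤ m := by
          by_contra h
          have : m = 0 := by omega
          rw [this] at hne; omega
        obtain ⟨m', rfl⟩ : ∃ m', m = m' + 1 := ⟨m - 1, by omega⟩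
        have hbm : b (m' + 1) = b m' + a (m' + 2) := hbs m'
        have ha2 := ha (m' + 2) (by omega)
        have hSn : Sfun b q n = q (m' + 2) := by
          rw [hne]; exact hSb (m' + 1)
        have hSn1 : Sfun b q (n - 1) = a (m' + 2) * q (m' + 1) := by
          have : n - 1 = b m' + (a (m' + 2) - 1) := by omega
          rw [this, hSval m' (a (m' + 2) - 1) (by omega)]
          congr 1
          omega
        have hqe := hq (m' + 1) (by omega)
        simp only [Nat.add_sub_cancel] at hqe
        rw [show m'+1+1 = m'+2 from rfl] at hqe
        by_cases h3 : 2 ≤ m' + 1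
        · rw [if_pos h3]
          obtain ⟨m'', rfl⟩ : ∃ m'', m' = m'' + 1 := ⟨m' - 1, by omega⟩
          have hSb' : Sfun b q (b (m'' + 1 + 1 - 2)) = q (m'' + 1) := by
            rw [show m'' + 1 + 1 - 2 = m'' from by omega]
            exact hSb m''
          rw [hSn, hSn1, hSb', hqe]
        · rw [if_neg h3]
          have : m' = 0 := by omega
          subst this
          rw [hSn, hSn1, hqe, hC1 0 (Nat.zero_le _), hq0]
  · -- tendsto
    rw [Filter.tendsto_atTop]
    intro N
    filter_upwards [Filter.eventually_ge_atTop (b (N + 2) + 1)] with n hn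
    have hb2 : b (N + 2) ≤ n := by omega
    have hbn : b 0 ≤ n := le_trans (hbmono.monotone (Nat.zero_le (N + 2))) hb2
    have h1 : ¬ (n ≤ b 0) := by
      have : b 0 < b (N + 2) := hbmono (by omega)
      omega
    have hKge : N + 2 ≤ Kfun b n :=
      Nat.le_findGreatest (le_trans hbmono.le_apply hb2) hb2
    unfold Qfun
    rw [if_neg h1]
    by_cases h2 : b (Kfun b n) < n
    · rw [if_pos h2]
      calc N ≤ Kfun b n := by omega
        _ ≤ b (Kfun b n) := hbmono.le_apply
    · rw [if_neg h2, if_pos (by omega)]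
      calc N ≤ Kfun b n - 2 := by omega
        _ ≤ b (Kfun b n - 2) := hbmono.le_apply
end

section
/- For every ω ∈ Ω, the sequence of partial sums Σ_{j=0}^{N} ω(j)·S(j)·ρ, regarded modulo 1 as elements of the circle ℝ/ℤ, converges as N → ∞; moreover, writing Π_ρ(ω) ∈ ℝ/ℤ for the limit, the map Π_ρ : Ω → ℝ/ℤ is continuous. -/
/-!
Lift each term `x j = ω j * S j * ρ` to the real number `x j - round (x j)`; this does not change
the partial sums modulo 1. On the block `[r k, r (k+1))` we have `S j = c * q k`, so
`|x j - round (x j)| ≤ ω j * c * |q k * ρ - p k| ≤ ω j * S j / (q k * q (k+1))`, and the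
defining inequality of `Ω` at `j = r (k+1) - 1` bounds `∑ ω j * S j` over the block by
`S (r (k+1)) = q (k+1)`. So every block of lifted terms has total size at most `1 / q k`,
uniformly in `ω`; as `q k` grows geometrically, the lifted partial sums converge uniformly
on `Ω`, and the limit is continuous.
-/

open Filter Finset Topology

section BlockSums

variable {X : Type*} {g : ℕ → X → ℝ} {R : ℕ → ℕ} {b : ℕ → ℝ}

theorem sum_Ico_abs_le_tsum_of_block_bound (hR : StrictMono R) (hb0 : 0 ≤ b) (hb : Summable b)
    (hblock : ∀ x k, ∑ i ∈ Ico (R k) (R (k + 1)), |g i x| ≤ b k) (x : X) (K M : ℕ) :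
    ∑ i ∈ Ico (R K) M, |g i x| ≤ ∑' k, b (k + K) := by
  have hblocks (n : ℕ) : ∑ i ∈ Ico (R K) (R (K + n)), |g i x| ≤ ∑ k ∈ range n, b (k + K) := by
    induction n with
    | zero => simp
    | succ n ih =>
      rw [← add_assoc, ← sum_Ico_consecutive _ (hR.monotone (Nat.le_add_right K n))
        (hR.monotone (Nat.le_succ (K + n))), sum_range_succ, add_comm n K]
      exact add_le_add ih (hblock x (K + n))
  calc ∑ i ∈ Ico (R K) M, |g i x| ≤ ∑ i ∈ Ico (R K) (R (K + M)), |g i x| :=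
        sum_le_sum_of_subset_of_nonneg (Ico_subset_Ico_right ((Nat.le_add_left M K).trans
          (hR.id_le _))) fun _ _ _ => abs_nonneg _
    _ ≤ ∑ k ∈ range M, b (k + K) := hblocks M
    _ ≤ ∑' k, b (k + K) :=
        ((summable_nat_add_iff K).mpr hb).sum_le_tsum _ fun k _ => hb0 (k + K)

theorem uniformCauchySeqOn_sum_range_of_block_bound (hR : StrictMono R) (hb0 : 0 ≤ b)
    (hb : Summable b) (hblock : ∀ x k, ∑ i ∈ Ico (R k) (R (k + 1)), |g i x| ≤ b k) :
    UniformCauchySeqOn (fun N x => ∑ i ∈ range N, g i x) atTop Set.univ := by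
  rw [Metric.uniformCauchySeqOn_iff]
  intro ε hε
  obtain ⟨K, hK⟩ := ((tendsto_sum_nat_add b).eventually (gt_mem_nhds hε)).exists
  have hdist : ∀ m n, R K ≤ m → m ≤ n → ∀ x,
      dist (∑ i ∈ range n, g i x) (∑ i ∈ range m, g i x) < ε := by
    intro m n hm hmn x
    rw [Real.dist_eq, ← sum_Ico_eq_sub _ hmn]
    calc |∑ i ∈ Ico m n, g i x| ≤ ∑ i ∈ Ico m n, |g i x| := abs_sum_le_sum_abs _ _
      _ ≤ ∑ i ∈ Ico (R K) n, |g i x| :=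
          sum_le_sum_of_subset_of_nonneg (Ico_subset_Ico_left hm) fun _ _ _ => abs_nonneg _
      _ ≤ ∑' k, b (k + K) := sum_Ico_abs_le_tsum_of_block_bound hR hb0 hb hblock x K n
      _ < ε := hK
  refine ⟨R K, fun m hm n hn x _ => ?_⟩
  rcases le_total m n with hmn | hnm
  · rw [dist_comm]
    exact hdist m n hm hmn x
  · exact hdist n m hn hnm x

theorem exists_continuous_tendsto_sum_range_of_block_bound [TopologicalSpace X]
    (hg : ∀ i, Continuous (g i)) (hR : StrictMono R) (hb0 : 0 ≤ b) (hb : Summable b)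
    (hblock : ∀ x k, ∑ i ∈ Ico (R k) (R (k + 1)), |g i x| ≤ b k) :
    ∃ F : X → ℝ, Continuous F ∧
      ∀ x, Tendsto (fun N => ∑ i ∈ range N, g i x) atTop (𝓝 (F x)) := by
  have hU := uniformCauchySeqOn_sum_range_of_block_bound hR hb0 hb hblock
  choose F hF using fun x => cauchySeq_tendsto_of_complete (hU.cauchySeq (Set.mem_univ x))
  have hUF := tendstoUniformlyOn_univ.mp (hU.tendstoUniformlyOn_of_tendsto fun x _ => hF x)
  exact ⟨F, hUF.continuous (Frequently.of_forall fun N => continuous_finsetSum _ fun i _ => hg i),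
    hF⟩

end BlockSums

namespace Convergents

variable {a p q : ℕ → ℕ}

theorem den_add_den_succ_le (ha : ∀ k, 1 ≤ k → 1 ≤ a k)
    (hq : ∀ k, 1 ≤ k → q (k + 1) = a (k + 1) * q k + q (k - 1)) (k : ℕ) :
    q k + q (k + 1) ≤ q (k + 2) := by
  have hrec : q (k + 2) = a (k + 2) * q (k + 1) + q k := hq (k + 1) (by omega)
  have hmul := Nat.mul_le_mul_right (q (k + 1)) (ha (k + 2) (by omega))
  omega

theorem monotone_den (ha : ∀ k, 1 ≤ k → 1 ≤ a k) (hq0 : q 0 = 1) (hq1 : q 1 = a 1)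
    (hq : ∀ k, 1 ≤ k → q (k + 1) = a (k + 1) * q k + q (k - 1)) : Monotone q := by
  refine monotone_nat_of_le_succ fun k => ?_
  cases k with
  | zero => simpa [hq0, hq1] using ha 1 le_rfl
  | succ k => exact (Nat.le_add_left _ _).trans (den_add_den_succ_le ha hq k)

theorem den_pos (ha : ∀ k, 1 ≤ k → 1 ≤ a k) (hq0 : q 0 = 1) (hq1 : q 1 = a 1)
    (hq : ∀ k, 1 ≤ k → q (k + 1) = a (k + 1) * q k + q (k - 1)) (k : ℕ) : 0 < q k :=
  (hq0 ▸ Nat.one_pos : 0 < q 0).trans_le (monotone_den ha hq0 hq1 hq k.zero_le)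

theorem two_pow_le_den (ha : ∀ k, 1 ≤ k → 1 ≤ a k) (hq0 : q 0 = 1) (hq1 : q 1 = a 1)
    (hq : ∀ k, 1 ≤ k → q (k + 1) = a (k + 1) * q k + q (k - 1)) (j : ℕ) :
    2 ^ j ≤ q (2 * j) := by
  induction j with
  | zero => simp [hq0]
  | succ j ih =>
    have h1 := den_add_den_succ_le ha hq (2 * j)
    have h2 : q (2 * j) ≤ q (2 * j + 1) := monotone_den ha hq0 hq1 hq (Nat.le_succ _)
    rw [pow_succ, show 2 * (j + 1) = 2 * j + 2 by ring]
    omega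

theorem summable_inv_den (ha : ∀ k, 1 ≤ k → 1 ≤ a k) (hq0 : q 0 = 1) (hq1 : q 1 = a 1)
    (hq : ∀ k, 1 ≤ k → q (k + 1) = a (k + 1) * q k + q (k - 1)) :
    Summable fun k => (q k : ℝ)⁻¹ := by
  have hbound : ∀ j k, 2 * j ≤ k → (q k : ℝ)⁻¹ ≤ (1 / 2) ^ j := fun j k hjk => by
    rw [one_div, inv_pow]
    gcongr
    exact_mod_cast (two_pow_le_den ha hq0 hq1 hq j).trans (monotone_den ha hq0 hq1 hq hjk)
  have hgeom := summable_geometric_of_lt_one (by norm_num : (0 : ℝ) ≤ 1 / 2) (by norm_num)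
  refine Summable.even_add_odd ?_ ?_ <;>
    refine hgeom.of_nonneg_of_le (fun j => by positivity) fun j => hbound j _ (by omega)

theorem num_succ_mul_den_sub (hq0 : q 0 = 1)
    (hq : ∀ k, 1 ≤ k → q (k + 1) = a (k + 1) * q k + q (k - 1))
    (hp0 : p 0 = 0) (hp1 : p 1 = 1)
    (hp : ∀ k, 1 ≤ k → p (k + 1) = a (k + 1) * p k + p (k - 1))
    (k : ℕ) : (p (k + 1) : ℝ) * q k - p k * q (k + 1) = (-1) ^ k := by
  induction k with
  | zero => simp [hp0, hp1, hq0]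
  | succ k ih =>
    have hpk : p (k + 2) = a (k + 2) * p (k + 1) + p k := hp (k + 1) (by omega)
    have hqk : q (k + 2) = a (k + 2) * q (k + 1) + q k := hq (k + 1) (by omega)
    rw [hpk, hqk, pow_succ]
    push_cast
    linear_combination -ih

theorem num_div_den_eq_sum (ha : ∀ k, 1 ≤ k → 1 ≤ a k) (hq0 : q 0 = 1) (hq1 : q 1 = a 1)
    (hq : ∀ k, 1 ≤ k → q (k + 1) = a (k + 1) * q k + q (k - 1))
    (hp0 : p 0 = 0) (hp1 : p 1 = 1)
    (hp : ∀ k, 1 ≤ k → p (k + 1) = a (k + 1) * p k + p (k - 1))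
    (n : ℕ) :
    (p n : ℝ) / q n = ∑ i ∈ range n, (-1) ^ i * ((q i : ℝ) * q (i + 1))⁻¹ := by
  induction n with
  | zero => simp [hp0]
  | succ n ih =>
    have hqn : (q n : ℝ) ≠ 0 := by exact_mod_cast (den_pos ha hq0 hq1 hq n).ne'
    have hqn' : (q (n + 1) : ℝ) ≠ 0 := by exact_mod_cast (den_pos ha hq0 hq1 hq (n + 1)).ne'
    rw [sum_range_succ, ← ih, ← num_succ_mul_den_sub hq0 hq hp0 hp1 hp n]
    field_simp
    ring

theorem abs_sub_num_div_den_le (ha : ∀ k, 1 ≤ k → 1 ≤ a k) (hq0 : q 0 = 1) (hq1 : q 1 = a 1)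
    (hq : ∀ k, 1 ≤ k → q (k + 1) = a (k + 1) * q k + q (k - 1))
    (hp0 : p 0 = 0) (hp1 : p 1 = 1)
    (hp : ∀ k, 1 ≤ k → p (k + 1) = a (k + 1) * p k + p (k - 1))
    {ρ : ℝ} (hρ : Tendsto (fun k => (p k : ℝ) / q k) atTop (𝓝 ρ)) (k : ℕ) :
    |ρ - p k / q k| ≤ ((q k : ℝ) * q (k + 1))⁻¹ := by
  set f : ℕ → ℝ := fun i => ((q i : ℝ) * q (i + 1))⁻¹ with hfdef
  have hc := num_div_den_eq_sum ha hq0 hq1 hq hp0 hp1 hp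
  have hlim : Tendsto (fun n => ∑ i ∈ range n, (-1) ^ i * f i) atTop (𝓝 ρ) := by
    simpa only [hc] using hρ
  have hqpos := fun i => (Nat.cast_pos (α := ℝ)).mpr (den_pos ha hq0 hq1 hq i)
  have hf0 : 0 ≤ f k := by positivity
  have hf : Antitone f := antitone_nat_of_succ_le fun i => by
    have hmono := monotone_den ha hq0 hq1 hq
    show ((q (i + 1) : ℝ) * q (i + 1 + 1))⁻¹ ≤ ((q i : ℝ) * q (i + 1))⁻¹
    gcongr
    · exact mul_pos (hqpos i) (hqpos (i + 1))
    · exact hmono (Nat.le_succ i)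
    · exact hmono (Nat.le_succ (i + 1))
  rw [abs_le, hc k]
  obtain ⟨j, rfl | rfl⟩ := Nat.even_or_odd' k
  · have hlo := hf.alternating_series_le_tendsto hlim j
    have hhi := hf.tendsto_le_alternating_series hlim j
    rw [sum_range_succ, pow_mul] at hhi
    norm_num at hhi
    constructor <;> linarith
  · have hlo := hf.alternating_series_le_tendsto hlim (j + 1)
    have hhi := hf.tendsto_le_alternating_series hlim j
    rw [show 2 * (j + 1) = 2 * j + 1 + 1 by ring, sum_range_succ, pow_succ, pow_mul] at hlo
    norm_num at hlo
    constructor <;> linarith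

theorem abs_den_mul_sub_num_le (ha : ∀ k, 1 ≤ k → 1 ≤ a k) (hq0 : q 0 = 1) (hq1 : q 1 = a 1)
    (hq : ∀ k, 1 ≤ k → q (k + 1) = a (k + 1) * q k + q (k - 1))
    (hp0 : p 0 = 0) (hp1 : p 1 = 1)
    (hp : ∀ k, 1 ≤ k → p (k + 1) = a (k + 1) * p k + p (k - 1))
    {ρ : ℝ} (hρ : Tendsto (fun k => (p k : ℝ) / q k) atTop (𝓝 ρ)) (k : ℕ) :
    |(q k : ℝ) * ρ - p k| ≤ (q (k + 1) : ℝ)⁻¹ := by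
  have hqk : (0 : ℝ) < q k := by exact_mod_cast den_pos ha hq0 hq1 hq k
  have hfactor : (q k : ℝ) * ρ - p k = q k * (ρ - p k / q k) := by field_simp
  calc |(q k : ℝ) * ρ - p k| = q k * |ρ - p k / q k| := by
        rw [hfactor, abs_mul, abs_of_pos hqk]
    _ ≤ q k * ((q k : ℝ) * q (k + 1))⁻¹ :=
        mul_le_mul_of_nonneg_left (abs_sub_num_div_den_le ha hq0 hq1 hq hp0 hp1 hp hρ k) hqk.le
    _ = (q (k + 1) : ℝ)⁻¹ := by rw [mul_inv, ← mul_assoc, mul_inv_cancel₀ hqk.ne', one_mul]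

end Convergents

theorem abs_nat_mul_sub_round_le (n : ℕ) (x : ℝ) (m : ℤ) :
    |n * x - round (n * x)| ≤ n * |x - m| :=
  calc |n * x - round (n * x)| ≤ |n * x - ((n * m : ℤ) : ℝ)| := round_le _ _
    _ = n * |x - m| := by push_cast; rw [← mul_sub, abs_mul, Nat.abs_cast]

theorem AddCircle.coe_sum_sub_round {ι : Type*} (s : Finset ι) (x : ι → ℝ) :
    ((∑ i ∈ s, (x i - round (x i)) : ℝ) : AddCircle (1 : ℝ)) = (∑ i ∈ s, x i : ℝ) := by
  rw [sum_sub_distrib, AddCircle.coe_sub, ← Int.cast_sum, sub_eq_self,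
    QuotientAddGroup.eq_zero_iff]
  exact AddSubgroup.intCast_mem_zmultiples_one _

section Blocks

variable {a p q r S : ℕ → ℕ} {ρ : ℝ}

theorem abs_sub_round_le_of_mem_block (hr : ∀ k, 1 ≤ k → r (k + 1) = r k + a (k + 1))
    (hShigh : ∀ k, 1 ≤ k → ∀ j, j < a (k + 1) → S (r k + j) = (j + 1) * q k)
    (hqpos : ∀ k, 0 < q k) (hB : ∀ k, |(q k : ℝ) * ρ - p k| ≤ (q (k + 1) : ℝ)⁻¹)
    {k i : ℕ} (hk : 1 ≤ k) (hi : i ∈ Ico (r k) (r (k + 1))) (n : ℕ) :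
    |(n : ℝ) * S i * ρ - round ((n : ℝ) * S i * ρ)| ≤
      (n * S i : ℕ) / ((q k : ℝ) * q (k + 1)) := by
  rw [mem_Ico, hr k hk] at hi
  set c := i - r k + 1
  have hS : S i = c * q k := by
    rw [← hShigh k hk (i - r k) (by omega)]
    congr 1
    omega
  have hqk : (0 : ℝ) < q k := by exact_mod_cast hqpos k
  have hx : (n : ℝ) * S i * ρ = ((n * c : ℕ) : ℝ) * (q k * ρ) := by
    rw [hS]; push_cast; ring
  calc |(n : ℝ) * S i * ρ - round ((n : ℝ) * S i * ρ)|
      ≤ (n * c : ℕ) * |(q k : ℝ) * ρ - p k| := by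
        rw [hx]; exact_mod_cast abs_nat_mul_sub_round_le (n * c) _ (p k)
    _ ≤ (n * c : ℕ) * (q (k + 1) : ℝ)⁻¹ := by gcongr; exact hB k
    _ = (n * S i : ℕ) / ((q k : ℝ) * q (k + 1)) := by
        rw [hS]; push_cast; field_simp

theorem sum_Ico_block_lt (ha : ∀ k, 1 ≤ k → 1 ≤ a k)
    (hr : ∀ k, 1 ≤ k → r (k + 1) = r k + a (k + 1))
    (hShigh : ∀ k, 1 ≤ k → ∀ j, j < a (k + 1) → S (r k + j) = (j + 1) * q k)
    {ω : ℕ → Bool} (hω : ∀ j, ∑ i ∈ range (j + 1), (ω i).toNat * S i < S (j + 1))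
    {k : ℕ} (hk : 1 ≤ k) :
    ∑ i ∈ Ico (r k) (r (k + 1)), (ω i).toNat * S i < q (k + 1) := by
  have hr_pos : 1 ≤ r (k + 1) := by have := ha (k + 1) (by omega); rw [hr k hk]; omega
  have hS : S (r (k + 1)) = q (k + 1) := by
    simpa using hShigh (k + 1) (by omega) 0 (ha (k + 2) (by omega))
  have hω' := hω (r (k + 1) - 1)
  rw [Nat.sub_add_cancel hr_pos, hS] at hω'
  exact (sum_le_sum_of_subset (Ico_subset_Ico_left (Nat.zero_le _))).trans_lt
    (by rwa [← range_eq_Ico])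

theorem sum_Ico_block_abs_sub_round_le (ha : ∀ k, 1 ≤ k → 1 ≤ a k)
    (hr : ∀ k, 1 ≤ k → r (k + 1) = r k + a (k + 1))
    (hShigh : ∀ k, 1 ≤ k → ∀ j, j < a (k + 1) → S (r k + j) = (j + 1) * q k)
    (hqpos : ∀ k, 0 < q k) (hB : ∀ k, |(q k : ℝ) * ρ - p k| ≤ (q (k + 1) : ℝ)⁻¹)
    {ω : ℕ → Bool} (hω : ∀ j, ∑ i ∈ range (j + 1), (ω i).toNat * S i < S (j + 1))
    {k : ℕ} (hk : 1 ≤ k) :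
    ∑ i ∈ Ico (r k) (r (k + 1)),
        |((ω i).toNat : ℝ) * S i * ρ - round (((ω i).toNat : ℝ) * S i * ρ)|
      ≤ (q k : ℝ)⁻¹ := by
  calc _ ≤ ∑ i ∈ Ico (r k) (r (k + 1)),
          ((ω i).toNat * S i : ℕ) / ((q k : ℝ) * q (k + 1)) :=
        sum_le_sum fun i hi => abs_sub_round_le_of_mem_block hr hShigh hqpos hB hk hi _
    _ = (∑ i ∈ Ico (r k) (r (k + 1)), (ω i).toNat * S i : ℕ) /
          ((q k : ℝ) * q (k + 1)) := by
        rw [← sum_div, Nat.cast_sum]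
    _ ≤ q (k + 1) / ((q k : ℝ) * q (k + 1)) := by
        gcongr; exact_mod_cast (sum_Ico_block_lt ha hr hShigh hω hk).le
    _ = (q k : ℝ)⁻¹ := by
        have := hqpos (k + 1)
        field_simp

end Blocks

theorem stmt_6_general (a : ℕ → ℕ) (ha : ∀ k, 1 ≤ k → 1 ≤ a k)
    (q : ℕ → ℕ) (hq0 : q 0 = 1) (hq1 : q 1 = a 1)
    (hq : ∀ k, 1 ≤ k → q (k + 1) = a (k + 1) * q k + q (k - 1))
    (p : ℕ → ℕ) (hp0 : p 0 = 0) (hp1 : p 1 = 1)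
    (hp : ∀ k, 1 ≤ k → p (k + 1) = a (k + 1) * p k + p (k - 1))
    (ρ : ℝ)
    (hρlim : Filter.Tendsto (fun k => (p k : ℝ) / (q k : ℝ)) Filter.atTop (nhds ρ))
    (r : ℕ → ℕ)
    (hr : ∀ k, 1 ≤ k → r (k + 1) = r k + a (k + 1))
    (S : ℕ → ℕ)
    (hShigh : ∀ k, 1 ≤ k → ∀ j, j < a (k + 1) → S (r k + j) = (j + 1) * q k) :
    ∃ Pi : {ω : ℕ → Bool //
        ∀ j, ∑ i ∈ Finset.range (j + 1), (ω i).toNat * S i < S (j + 1)} → AddCircle (1 : ℝ),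
      Continuous Pi ∧
      ∀ ω, Filter.Tendsto
        (fun N => ((↑(∑ j ∈ Finset.range (N + 1),
            ((ω.val j).toNat : ℝ) * (S j : ℝ) * ρ)) : AddCircle (1 : ℝ)))
        Filter.atTop (nhds (Pi ω)) := by
  have hqpos := Convergents.den_pos ha hq0 hq1 hq
  have hB := Convergents.abs_den_mul_sub_num_le ha hq0 hq1 hq hp0 hp1 hp hρlim
  have hR : StrictMono fun k => r (k + 1) := strictMono_nat_of_lt_succ fun k => by
    show r (k + 1) < r (k + 1 + 1)
    have := ha (k + 1 + 1) (by omega)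
    rw [hr (k + 1) (by omega)]
    omega
  obtain ⟨F, hFcont, hF⟩ := exists_continuous_tendsto_sum_range_of_block_bound
    (X := {ω : ℕ → Bool // ∀ j, ∑ i ∈ Finset.range (j + 1), (ω i).toNat * S i < S (j + 1)})
    (g := fun i ω =>
      ((ω.val i).toNat : ℝ) * S i * ρ - round (((ω.val i).toNat : ℝ) * S i * ρ))
    (fun i => (continuous_of_discreteTopology (f := fun b : Bool =>
      (b.toNat : ℝ) * S i * ρ - round ((b.toNat : ℝ) * S i * ρ))).comp
        ((continuous_apply i).comp continuous_subtype_val))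
    hR (b := fun k => (q (k + 1) : ℝ)⁻¹) (fun k => by positivity)
    ((summable_nat_add_iff 1).mpr (Convergents.summable_inv_den ha hq0 hq1 hq))
    fun ω k => sum_Ico_block_abs_sub_round_le ha hr hShigh hqpos hB ω.2 (Nat.le_add_left 1 k)
  refine ⟨fun ω => (F ω : AddCircle (1 : ℝ)), (AddCircle.continuous_mk' 1).comp hFcont,
    fun ω => ?_⟩
  exact (((AddCircle.continuous_mk' 1).tendsto _).comp
    ((tendsto_add_atTop_iff_nat 1).mpr (hF ω))).congr fun N => AddCircle.coe_sum_sub_round _ _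

/-- With `a`, `p`, `q`, `r`, `S` as in the rotation-like construction,
`ρ ∈ (0,1)` the irrational number with continued fraction `[0; a 1, a 2, …]`
(i.e. `ρ = lim p k / q k`), and `Ω ⊆ {0,1}^ℕ` with the product topology:
for every `ω ∈ Ω` the partial sums `Σ_{j=0}^{N} ω j * S j * ρ`, regarded modulo 1 as
elements of the circle `ℝ/ℤ`, converge as `N → ∞`, and the limit map
`Π_ρ : Ω → ℝ/ℤ` is continuous. -/
theorem stmt_6 (a : ℕ → ℕ) (ha : ∀ k, 1 ≤ k → 1 ≤ a k)
    (q : ℕ → ℕ) (hq0 : q 0 = 1) (hq1 : q 1 = a 1)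
    (hq : ∀ k, 1 ≤ k → q (k + 1) = a (k + 1) * q k + q (k - 1))
    (p : ℕ → ℕ) (hp0 : p 0 = 0) (hp1 : p 1 = 1)
    (hp : ∀ k, 1 ≤ k → p (k + 1) = a (k + 1) * p k + p (k - 1))
    (ρ : ℝ) (hρirr : Irrational ρ) (hρmem : ρ ∈ Set.Ioo (0 : ℝ) 1)
    (hρlim : Filter.Tendsto (fun k => (p k : ℝ) / (q k : ℝ)) Filter.atTop (nhds ρ))
    (r : ℕ → ℕ) (hr1 : r 1 = q 1 - 1)
    (hr : ∀ k, 1 ≤ k → r (k + 1) = r k + a (k + 1))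
    (S : ℕ → ℕ) (hSlow : ∀ j, j ≤ r 1 → S j = j + 1)
    (hShigh : ∀ k, 1 ≤ k → ∀ j, j < a (k + 1) → S (r k + j) = (j + 1) * q k) :
    ∃ Pi : {ω : ℕ → Bool //
        ∀ j, ∑ i ∈ Finset.range (j + 1), (ω i).toNat * S i < S (j + 1)} → AddCircle (1 : ℝ),
      Continuous Pi ∧
      ∀ ω, Filter.Tendsto
        (fun N => ((↑(∑ j ∈ Finset.range (N + 1),
            ((ω.val j).toNat : ℝ) * (S j : ℝ) * ρ)) : AddCircle (1 : ℝ)))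
        Filter.atTop (nhds (Pi ω)) :=
  stmt_6_general a ha q hq0 hq1 hq p hp0 hp1 hp ρ hρlim r hr S hShigh
end

section
/- Let T : Ω → Ω be the unique continuous map with T(⟨n⟩) = ⟨n+1⟩ for all n ∈ ℕ (such a map exists). Then Π_ρ(T(ω)) = Π_ρ(ω) + ρ in ℝ/ℤ for every ω ∈ Ω; that is, Π_ρ semiconjugates T to the rotation of the circle by angle ρ. -/
/-! `Π_ρ ⟨n⟩ = nρ`, since the partial sums defining `Π_ρ ⟨n⟩` are eventually `nρ`, so
`Π_ρ ∘ T` and `Π_ρ + ρ` agree on the points `⟨n⟩`. These points are dense in `Ω`: the truncation of any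
`ω ∈ Ω` to its first `N` digits is again admissible, because the scale `S` is monotone, and by
uniqueness of admissible expansions it is `⟨n⟩` for `n = Σ_{i<N} ω(i) S(i)`. Both maps being
continuous, they agree everywhere. -/

open Filter Finset Topology

namespace Ostrowski

def Admissible (S : ℕ → ℕ) (d : ℕ → Bool) : Prop :=
  ∀ j, ∑ i ∈ range (j + 1), (d i).toNat * S i < S (j + 1)

variable {S : ℕ → ℕ} {d e : ℕ → Bool}

theorem Admissible.sum_range_lt (hS0 : 0 < S 0) (hd : Admissible S d) :
    ∀ M, ∑ i ∈ range M, (d i).toNat * S i < S M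
  | 0 => by simpa using hS0
  | j + 1 => hd j

theorem Admissible.eq_of_sum_range_eq (hS0 : 0 < S 0) (hd : Admissible S d)
    (he : Admissible S e) {M : ℕ} (hagree : ∀ i, M ≤ i → d i = e i)
    (hsum : ∑ i ∈ range M, (d i).toNat * S i = ∑ i ∈ range M, (e i).toNat * S i) :
    d = e := by
  induction M with
  | zero => exact funext fun i => hagree i (Nat.zero_le i)
  | succ M ih =>
    rw [sum_range_succ, sum_range_succ] at hsum
    have hdM := hd.sum_range_lt hS0 M
    have heM := he.sum_range_lt hS0 M
    -- a digit `1` at position `M` outweighs all lower digits of an admissible expansion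
    have hM : d M = e M := by
      cases hd' : d M <;> cases he' : e M <;> simp only [hd', he'] at hsum ⊢ <;> simp at hsum <;>
        omega
    refine ih (fun i hi => ?_) (by simpa [hM] using hsum)
    rcases hi.eq_or_lt with rfl | hi
    exacts [hM, hagree i hi]

theorem exists_forall_ge_eq_false (hd : {j | d j = true}.Finite) :
    ∃ M, ∀ i, M ≤ i → d i = false := by
  obtain ⟨M, hM⟩ := hd.bddAbove
  refine ⟨M + 1, fun i hi => ?_⟩
  by_contra h
  have := hM (Bool.not_eq_false _ |>.mp h)
  omega

theorem finsum_eq_sum_range {N : ℕ} (hN : ∀ i, N ≤ i → d i = false) :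
    ∑ᶠ j, (d j).toNat * S j = ∑ i ∈ range N, (d i).toNat * S i := by
  refine finsum_eq_sum_of_support_subset _ fun i hi => ?_
  by_contra h
  simp [hN i (by simpa using h)] at hi

theorem Admissible.eq_of_finsum_eq (hS0 : 0 < S 0) (hd : Admissible S d) (he : Admissible S e)
    (hdfin : {j | d j = true}.Finite) (hefin : {j | e j = true}.Finite)
    (hsum : ∑ᶠ j, (d j).toNat * S j = ∑ᶠ j, (e j).toNat * S j) : d = e := by
  obtain ⟨Md, hMd⟩ := exists_forall_ge_eq_false hdfin
  obtain ⟨Me, hMe⟩ := exists_forall_ge_eq_false hefin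
  have hd0 : ∀ i, max Md Me ≤ i → d i = false := fun i hi => hMd i (le_of_max_le_left hi)
  have he0 : ∀ i, max Md Me ≤ i → e i = false := fun i hi => hMe i (le_of_max_le_right hi)
  rw [finsum_eq_sum_range hd0, finsum_eq_sum_range he0] at hsum
  exact hd.eq_of_sum_range_eq hS0 he (fun i hi => (hd0 i hi).trans (he0 i hi).symm) hsum

def truncate (d : ℕ → Bool) (N i : ℕ) : Bool :=
  if i < N then d i else false

theorem sum_range_truncate_of_le {M N : ℕ} (h : M ≤ N) :
    ∑ i ∈ range M, (truncate d N i).toNat * S i = ∑ i ∈ range M, (d i).toNat * S i :=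
  sum_congr rfl fun i hi => by simp [truncate, (mem_range.1 hi).trans_le h]

theorem finsum_truncate (N : ℕ) :
    ∑ᶠ j, (truncate d N j).toNat * S j = ∑ i ∈ range N, (d i).toNat * S i := by
  rw [finsum_eq_sum_range (N := N) (fun i hi => by simp [truncate, hi.not_gt]),
    sum_range_truncate_of_le le_rfl]

theorem finite_truncate (N : ℕ) : {j | truncate d N j = true}.Finite :=
  (Set.finite_Iio N).subset fun i hi => Set.mem_Iio.2 <| by
    by_contra h
    simp [truncate, h] at hi

theorem Admissible.truncate (hS : Monotone S) (hS0 : 0 < S 0) (hd : Admissible S d) (N : ℕ) :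
    Admissible S (truncate d N) := by
  intro j
  rcases le_or_gt (j + 1) N with h | h
  · rw [sum_range_truncate_of_le h]
    exact hd j
  · rw [← finsum_eq_sum_range (fun i hi => by simp [Ostrowski.truncate, hi.trans' h.le]),
      finsum_truncate]
    exact (hd.sum_range_lt hS0 N).trans_le (hS h.le)

theorem tendsto_truncate (d : ℕ → Bool) : Tendsto (truncate d) atTop (𝓝 d) :=
  tendsto_pi_nhds.2 fun i => tendsto_const_nhds.congr' <|
    (eventually_gt_atTop i).mono fun N hN => by simp [truncate, hN]

theorem dense_range_of_finsum_eq (hS : Monotone S) (hS0 : 0 < S 0) {angle : ℕ → ℕ → Bool}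
    (hangle : ∀ n, {j | angle n j = true}.Finite ∧ (∑ᶠ j, (angle n j).toNat * S j = n) ∧
      Admissible S (angle n)) :
    Dense (Set.range fun n => (⟨angle n, (hangle n).2.2⟩ : {ω // Admissible S ω})) := by
  intro ω
  refine mem_closure_of_tendsto
    (f := fun N => (⟨truncate ω.1 N, ω.2.truncate hS hS0 N⟩ : {ω // Admissible S ω}))
    (tendsto_subtype_rng.2 (tendsto_truncate ω.1)) (Eventually.of_forall fun N => ?_)
  refine ⟨∑ i ∈ range N, (ω.1 i).toNat * S i, Subtype.ext ?_⟩
  refine (hangle _).2.2.eq_of_finsum_eq hS0 (ω.2.truncate hS hS0 N) (hangle _).1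
    (finite_truncate N) ?_
  rw [(hangle _).2.1, finsum_truncate]

theorem eq_of_tendsto_partial_sums {p ρ : ℝ} {x : AddCircle p} (hd : {j | d j = true}.Finite)
    (h : Tendsto
      (fun N => ((∑ j ∈ range (N + 1), ((d j).toNat : ℝ) * S j * ρ : ℝ) : AddCircle p))
      atTop (𝓝 x)) :
    x = (((∑ᶠ j, (d j).toNat * S j : ℕ) * ρ : ℝ) : AddCircle p) := by
  obtain ⟨M, hM⟩ := exists_forall_ge_eq_false hd
  refine tendsto_nhds_unique h (tendsto_const_nhds.congr' ((eventually_ge_atTop M).mono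
    fun N hN => ?_))
  rw [finsum_eq_sum_range (S := S) (N := N + 1) (fun i hi => hM i (by omega))]
  push_cast
  rw [sum_mul]

theorem monotone_of_blocks {a q r : ℕ → ℕ} (ha : ∀ k, 1 ≤ k → 1 ≤ a k)
    (hq : ∀ k, 1 ≤ k → q (k + 1) = a (k + 1) * q k + q (k - 1))
    (hr : ∀ k, 1 ≤ k → r (k + 1) = r k + a (k + 1))
    (hSlow : ∀ j, j ≤ r 1 → S j = j + 1)
    (hShigh : ∀ k, 1 ≤ k → ∀ j, j < a (k + 1) → S (r k + j) = (j + 1) * q k) :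
    Monotone S := by
  -- within the block `[r k, r (k + 1))` the scale is `(j + 1) q k`, and it ends at
  -- `a (k + 1) q k ≤ q (k + 1)`, the first value of the next block
  have hblock : ∀ k, 1 ≤ k → ∀ j < r k, S j ≤ S (j + 1) := by
    refine Nat.le_induction (fun j hj => ?_) fun k hk ih j hj => ?_
    · rw [hSlow j hj.le, hSlow (j + 1) hj]
      omega
    rcases lt_or_ge j (r k) with hjk | hjk
    · exact ih j hjk
    obtain ⟨i, rfl⟩ := Nat.exists_eq_add_of_le hjk
    have hi : i < a (k + 1) := by rw [hr k hk] at hj; omega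
    rw [hShigh k hk i hi]
    rcases lt_or_ge (i + 1) (a (k + 1)) with hi' | hi'
    · rw [add_assoc, hShigh k hk (i + 1) hi']
      exact Nat.mul_le_mul_right _ (Nat.le_succ _)
    · have hlast : r k + i + 1 = r (k + 1) + 0 := by rw [hr k hk]; omega
      rw [hlast, hShigh (k + 1) (by omega) 0 (ha (k + 2) (by omega)), hq k hk]
      nlinarith
  have hr_ge : ∀ k, k ≤ r (k + 1) := fun k => by
    induction k with
    | zero => exact Nat.zero_le _
    | succ k ih =>
      have := hr (k + 1) (by omega)
      have := ha (k + 1 + 1) (by omega)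
      omega
  exact monotone_nat_of_le_succ fun j =>
    hblock (j + 1 + 1) (by omega) j (by have := hr_ge (j + 1); omega)

end Ostrowski

theorem stmt_7_general (a : ℕ → ℕ) (ha : ∀ k, 1 ≤ k → 1 ≤ a k)
    (q : ℕ → ℕ)
    (hq : ∀ k, 1 ≤ k → q (k + 1) = a (k + 1) * q k + q (k - 1))
    (ρ : ℝ)
    (r : ℕ → ℕ)
    (hr : ∀ k, 1 ≤ k → r (k + 1) = r k + a (k + 1))
    (S : ℕ → ℕ) (hSlow : ∀ j, j ≤ r 1 → S j = j + 1)
    (hShigh : ∀ k, 1 ≤ k → ∀ j, j < a (k + 1) → S (r k + j) = (j + 1) * q k)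
    (angle : ℕ → (ℕ → Bool))
    (hangle : ∀ n, {j | angle n j = true}.Finite ∧
      (∑ᶠ j, (angle n j).toNat * S j = n) ∧
      ∀ j, ∑ i ∈ Finset.range (j + 1), (angle n i).toNat * S i < S (j + 1))
    (T : {ω : ℕ → Bool // ∀ j, ∑ i ∈ Finset.range (j + 1), (ω i).toNat * S i < S (j + 1)}
       → {ω : ℕ → Bool // ∀ j, ∑ i ∈ Finset.range (j + 1), (ω i).toNat * S i < S (j + 1)})
    (hTcont : Continuous T)
    (hT : ∀ n : ℕ, (T ⟨angle n, (hangle n).2.2⟩).val = angle (n + 1))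
    (Pi : {ω : ℕ → Bool //
        ∀ j, ∑ i ∈ Finset.range (j + 1), (ω i).toNat * S i < S (j + 1)} → AddCircle (1 : ℝ))
    (hPicont : Continuous Pi)
    (hPi : ∀ ω, Filter.Tendsto
        (fun N => ((↑(∑ j ∈ Finset.range (N + 1),
            ((ω.val j).toNat : ℝ) * (S j : ℝ) * ρ)) : AddCircle (1 : ℝ)))
        Filter.atTop (nhds (Pi ω))) :
    ∀ ω, Pi (T ω) = Pi ω + ((ρ : ℝ) : AddCircle (1 : ℝ)) := by
  have hS0 : 0 < S 0 := by rw [hSlow 0 (Nat.zero_le _)]; exact Nat.one_pos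
  have hS : Monotone S := Ostrowski.monotone_of_blocks ha hq hr hSlow hShigh
  have hPi_angle (n : ℕ) :
      Pi ⟨angle n, (hangle n).2.2⟩ = ((n * ρ : ℝ) : AddCircle (1 : ℝ)) := by
    rw [Ostrowski.eq_of_tendsto_partial_sums (hangle n).1 (hPi ⟨angle n, (hangle n).2.2⟩),
      (hangle n).2.1]
  have hstep (n : ℕ) :
      Pi (T ⟨angle n, (hangle n).2.2⟩) =
        Pi ⟨angle n, (hangle n).2.2⟩ + ((ρ : ℝ) : AddCircle (1 : ℝ)) := by
    rw [show T _ = ⟨angle (n + 1), (hangle (n + 1)).2.2⟩ from Subtype.ext (hT n), hPi_angle,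
      hPi_angle, ← AddCircle.coe_add]
    push_cast
    ring_nf
  exact congrFun <| Continuous.ext_on (Ostrowski.dense_range_of_finsum_eq hS hS0 hangle)
    (hPicont.comp hTcont) (hPicont.add continuous_const) (Set.forall_mem_range.2 hstep)

/-- With the rotation-like data `a, p, q, r, S, ρ` as before,
`Ω ⊆ {0,1}^ℕ` with the product topology, `⟨n⟩ = angle n` the unique finitely supported
element of `Ω` with `Σ_j ⟨n⟩ j * S j = n`, `T : Ω → Ω` the (unique) continuous map with
`T ⟨n⟩ = ⟨n+1⟩`, and `Π_ρ : Ω → ℝ/ℤ` the continuous map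
`ω ↦ lim_N Σ_{j=0}^{N} ω j * S j * ρ (mod 1)`:
`Π_ρ (T ω) = Π_ρ ω + ρ` in `ℝ/ℤ` for every `ω ∈ Ω`, i.e. `Π_ρ` semiconjugates `T`
to the rotation of the circle by angle `ρ`. -/
theorem stmt_7 (a : ℕ → ℕ) (ha : ∀ k, 1 ≤ k → 1 ≤ a k)
    (q : ℕ → ℕ) (hq0 : q 0 = 1) (hq1 : q 1 = a 1)
    (hq : ∀ k, 1 ≤ k → q (k + 1) = a (k + 1) * q k + q (k - 1))
    (p : ℕ → ℕ) (hp0 : p 0 = 0) (hp1 : p 1 = 1)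
    (hp : ∀ k, 1 ≤ k → p (k + 1) = a (k + 1) * p k + p (k - 1))
    (ρ : ℝ) (hρirr : Irrational ρ) (hρmem : ρ ∈ Set.Ioo (0 : ℝ) 1)
    (hρlim : Filter.Tendsto (fun k => (p k : ℝ) / (q k : ℝ)) Filter.atTop (nhds ρ))
    (r : ℕ → ℕ) (hr1 : r 1 = q 1 - 1)
    (hr : ∀ k, 1 ≤ k → r (k + 1) = r k + a (k + 1))
    (S : ℕ → ℕ) (hSlow : ∀ j, j ≤ r 1 → S j = j + 1)
    (hShigh : ∀ k, 1 ≤ k → ∀ j, j < a (k + 1) → S (r k + j) = (j + 1) * q k)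
    (angle : ℕ → (ℕ → Bool))
    (hangle : ∀ n, {j | angle n j = true}.Finite ∧
      (∑ᶠ j, (angle n j).toNat * S j = n) ∧
      ∀ j, ∑ i ∈ Finset.range (j + 1), (angle n i).toNat * S i < S (j + 1))
    (T : {ω : ℕ → Bool // ∀ j, ∑ i ∈ Finset.range (j + 1), (ω i).toNat * S i < S (j + 1)}
       → {ω : ℕ → Bool // ∀ j, ∑ i ∈ Finset.range (j + 1), (ω i).toNat * S i < S (j + 1)})
    (hTcont : Continuous T)
    (hT : ∀ n : ℕ, (T ⟨angle n, (hangle n).2.2⟩).val = angle (n + 1))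
    (Pi : {ω : ℕ → Bool //
        ∀ j, ∑ i ∈ Finset.range (j + 1), (ω i).toNat * S i < S (j + 1)} → AddCircle (1 : ℝ))
    (hPicont : Continuous Pi)
    (hPi : ∀ ω, Filter.Tendsto
        (fun N => ((↑(∑ j ∈ Finset.range (N + 1),
            ((ω.val j).toNat : ℝ) * (S j : ℝ) * ρ)) : AddCircle (1 : ℝ)))
        Filter.atTop (nhds (Pi ω))) :
    ∀ ω, Pi (T ω) = Pi ω + ((ρ : ℝ) : AddCircle (1 : ℝ)) :=
  stmt_7_general a ha q hq ρ r hr S hSlow hShigh angle hangle T hTcont hT Pi hPicont hPi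
end

section
/- The map Π_ρ : Ω → ℝ/ℤ is surjective. -/
/-!
The scale `S` starts at `1`, is strictly increasing and at most doubles from one index to the
next, so the greedy (Ostrowski) expansion writes every `n : ℕ` as a finite sum `∑ i ∈ F, S i`
whose digit sequence lies in `Ω`; its image under `Π_ρ` is `n • ρ`. The multiples `n • ρ` are
dense in the circle because `ρ` is irrational, and the image of `Π_ρ` is closed because `Ω` is
compact, so `Π_ρ` is onto.
-/

open Finset Filter Topology

/-- The digit condition defining `Ω`. -/
abbrev IsAdmissible (S : ℕ → ℕ) (ω : ℕ → Bool) : Prop :=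
  ∀ j, ∑ i ∈ range (j + 1), (ω i).toNat * S i < S (j + 1)

theorem isClosed_setOf_isAdmissible (S : ℕ → ℕ) : IsClosed {ω | IsAdmissible S ω} := by
  simp only [IsAdmissible, Set.ofPred_forall]
  refine isClosed_iInter fun j => (isClosed_discrete {m : ℕ | m < S (j + 1)}).preimage ?_
  refine continuous_finsetSum _ fun i _ => ?_
  exact (continuous_of_discreteTopology (f := fun b : Bool => b.toNat * S i)).comp
    (continuous_apply i)

instance (S : ℕ → ℕ) : CompactSpace {ω // IsAdmissible S ω} :=
  isCompact_iff_compactSpace.mp (isClosed_setOf_isAdmissible S).isCompact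

theorem sum_range_toNat_decide_mem_mul (F : Finset ℕ) (f : ℕ → ℕ) (k : ℕ) :
    ∑ i ∈ range k, (decide (i ∈ F)).toNat * f i = ∑ i ∈ range k ∩ F, f i := by
  rw [← sum_ite_mem]
  refine sum_congr rfl fun i _ => ?_
  by_cases hi : i ∈ F <;> simp [hi]

section Greedy

variable {S : ℕ → ℕ}

theorem exists_finset_sum_eq_of_lt (hS0 : S 0 = 1) (hS : Monotone S)
    (hS2 : ∀ j, S (j + 1) ≤ 2 * S j) (m n : ℕ) (hn : n < S m) :
    ∃ F ⊆ range m, ∑ i ∈ F, S i = n ∧ ∀ j, ∑ i ∈ range (j + 1) ∩ F, S i < S (j + 1) := by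
  induction m generalizing n with
  | zero =>
    refine ⟨∅, empty_subset _, by rw [sum_empty]; omega, fun j => ?_⟩
    have := hS (Nat.zero_le (j + 1))
    simp only [inter_empty, sum_empty]
    omega
  | succ m ih =>
    by_cases hnm : n < S m
    · obtain ⟨F, hFm, hsum, hadm⟩ := ih n hnm
      exact ⟨F, hFm.trans (range_subset_range.mpr m.le_succ), hsum, hadm⟩
    have hrest : n - S m < S m := by have := hS2 m; omega
    obtain ⟨F, hFm, hsum, hadm⟩ := ih (n - S m) hrest
    have hmF : m ∉ F := fun h => by simpa using hFm h
    have hsum' : ∑ i ∈ insert m F, S i = n := by rw [sum_insert hmF, hsum]; omega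
    refine ⟨insert m F, insert_subset (by simp) (hFm.trans (range_subset_range.mpr m.le_succ)),
      hsum', fun j => ?_⟩
    rcases lt_or_ge j m with hjm | hjm
    · rw [inter_insert_of_notMem (by rw [mem_range]; omega)]
      exact hadm j
    · calc ∑ i ∈ range (j + 1) ∩ insert m F, S i ≤ ∑ i ∈ insert m F, S i :=
            sum_le_sum_of_subset inter_subset_right
        _ < S (m + 1) := by omega
        _ ≤ S (j + 1) := hS (by omega)

theorem nsmul_mem_range (hS0 : S 0 = 1) (hS : StrictMono S) (hS2 : ∀ j, S (j + 1) ≤ 2 * S j)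
    (ρ : ℝ) (Pi : {ω // IsAdmissible S ω} → AddCircle (1 : ℝ))
    (hPi : ∀ ω, Tendsto (fun N => ((↑(∑ j ∈ range (N + 1),
        ((ω.val j).toNat : ℝ) * (S j : ℝ) * ρ)) : AddCircle (1 : ℝ))) atTop (𝓝 (Pi ω)))
    (n : ℕ) : n • (ρ : AddCircle (1 : ℝ)) ∈ Set.range Pi := by
  obtain ⟨F, hFm, hsum, hadm⟩ :=
    exists_finset_sum_eq_of_lt hS0 hS.monotone hS2 (n + 1) n (hS.id_le (n + 1))
  let ω : {ω // IsAdmissible S ω} :=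
    ⟨fun i => decide (i ∈ F), fun j => by rw [sum_range_toNat_decide_mem_mul]; exact hadm j⟩
  have hpartial : ∀ N, n ≤ N → ∑ j ∈ range (N + 1), (ω.val j).toNat * S j = n := by
    intro N hN
    rw [sum_range_toNat_decide_mem_mul, inter_eq_right.mpr
      (hFm.trans (range_subset_range.mpr (by omega))), hsum]
  refine ⟨ω, tendsto_nhds_unique (hPi ω) (tendsto_const_nhds.congr' ?_)⟩
  filter_upwards [eventually_ge_atTop n] with N hN
  have hcast : ∑ j ∈ range (N + 1), ((ω.val j).toNat : ℝ) * (S j : ℝ) = n := by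
    exact_mod_cast hpartial N hN
  rw [← sum_mul, hcast, ← nsmul_eq_mul, AddCircle.coe_nsmul]

end Greedy

section ContinuedFraction

variable {a q r S : ℕ → ℕ}

theorem le_q_succ (ha : ∀ k, 1 ≤ k → 1 ≤ a k) (hq0 : q 0 = 1) (hq1 : q 1 = a 1)
    (hq : ∀ k, 1 ≤ k → q (k + 1) = a (k + 1) * q k + q (k - 1)) (k : ℕ) : q k ≤ q (k + 1) := by
  cases k with
  | zero => rw [hq0, hq1]; exact ha 1 le_rfl
  | succ k =>
    rw [hq (k + 1) (by omega)]
    nlinarith [ha (k + 2) (by omega)]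

theorem exists_eq_block_add (ha : ∀ k, 1 ≤ k → 1 ≤ a k)
    (hr : ∀ k, 1 ≤ k → r (k + 1) = r k + a (k + 1)) (j : ℕ) (hj : r 1 ≤ j) :
    ∃ k, 1 ≤ k ∧ ∃ i < a (k + 1), j = r k + i := by
  induction j, hj using Nat.le_induction with
  | base => exact ⟨1, le_rfl, 0, ha 2 (by omega), rfl⟩
  | succ j _ ih =>
    obtain ⟨k, hk, i, hi, rfl⟩ := ih
    by_cases hi' : i + 1 < a (k + 1)
    · exact ⟨k, hk, i + 1, hi', by omega⟩
    · exact ⟨k + 1, by omega, 0, ha (k + 2) (by omega), by rw [hr k hk]; omega⟩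

theorem lt_S_succ_and_S_succ_le (ha : ∀ k, 1 ≤ k → 1 ≤ a k) (hq0 : q 0 = 1) (hq1 : q 1 = a 1)
    (hq : ∀ k, 1 ≤ k → q (k + 1) = a (k + 1) * q k + q (k - 1))
    (hr : ∀ k, 1 ≤ k → r (k + 1) = r k + a (k + 1))
    (hSlow : ∀ j, j ≤ r 1 → S j = j + 1)
    (hShigh : ∀ k, 1 ≤ k → ∀ j, j < a (k + 1) → S (r k + j) = (j + 1) * q k) (j : ℕ) :
    S j < S (j + 1) ∧ S (j + 1) ≤ 2 * S j := by
  have hqmono : Monotone q := monotone_nat_of_le_succ (le_q_succ ha hq0 hq1 hq)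
  have hqpos : ∀ k, 1 ≤ q k := fun k => hq0 ▸ hqmono (Nat.zero_le k)
  by_cases hlow : j + 1 ≤ r 1
  · rw [hSlow j (by omega), hSlow (j + 1) hlow]
    omega
  obtain ⟨k, hk, i, hi, rfl⟩ := exists_eq_block_add ha hr j (by omega)
  rw [hShigh k hk i hi]
  have := hqpos k
  by_cases hinner : i + 1 < a (k + 1)
  · rw [add_assoc, hShigh k hk (i + 1) hinner]
    constructor <;> nlinarith
  -- `S` passes from `a (k + 1) * q k` to `q (k + 1) = a (k + 1) * q k + q (k - 1)`.
  have hnext : r k + i + 1 = r (k + 1) + 0 := by rw [hr k hk]; omega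
  rw [hnext, hShigh (k + 1) (by omega) 0 (ha (k + 2) (by omega)), hq k hk,
    show i + 1 = a (k + 1) by omega]
  have := hqpos (k - 1)
  have := hqmono (Nat.sub_le k 1)
  constructor <;> nlinarith

end ContinuedFraction

theorem stmt_9_general (a : ℕ → ℕ) (ha : ∀ k, 1 ≤ k → 1 ≤ a k)
    (q : ℕ → ℕ) (hq0 : q 0 = 1) (hq1 : q 1 = a 1)
    (hq : ∀ k, 1 ≤ k → q (k + 1) = a (k + 1) * q k + q (k - 1))
    (ρ : ℝ) (hρirr : Irrational ρ)
    (r : ℕ → ℕ)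
    (hr : ∀ k, 1 ≤ k → r (k + 1) = r k + a (k + 1))
    (S : ℕ → ℕ) (hSlow : ∀ j, j ≤ r 1 → S j = j + 1)
    (hShigh : ∀ k, 1 ≤ k → ∀ j, j < a (k + 1) → S (r k + j) = (j + 1) * q k)
    (Pi : {ω : ℕ → Bool //
        ∀ j, ∑ i ∈ Finset.range (j + 1), (ω i).toNat * S i < S (j + 1)} → AddCircle (1 : ℝ))
    (hPicont : Continuous Pi)
    (hPi : ∀ ω, Filter.Tendsto
        (fun N => ((↑(∑ j ∈ Finset.range (N + 1),
            ((ω.val j).toNat : ℝ) * (S j : ℝ) * ρ)) : AddCircle (1 : ℝ)))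
        Filter.atTop (nhds (Pi ω))) :
    Function.Surjective Pi := by
  have hS := lt_S_succ_and_S_succ_le ha hq0 hq1 hq hr hSlow hShigh
  have hrange : Set.range (fun n : ℕ => n • (ρ : AddCircle (1 : ℝ))) ⊆ Set.range Pi := by
    rintro _ ⟨n, rfl⟩
    exact nsmul_mem_range (hSlow 0 (Nat.zero_le _)) (strictMono_nat_of_lt_succ fun j => (hS j).1)
      (fun j => (hS j).2) ρ Pi hPi n
  have hdense : DenseRange (fun n : ℕ => n • (ρ : AddCircle (1 : ℝ))) :=
    denseRange_zsmul_iff_nsmul.mp (AddCircle.denseRange_zsmul_coe_iff.mpr (by simpa using hρirr))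
  have hclosed : IsClosed (Set.range Pi) := (isCompact_range hPicont).isClosed
  rw [← Set.range_eq_univ, ← hclosed.closure_eq]
  exact (hdense.mono hrange).closure_eq

/-- With the rotation-like data `a, p, q, r, S, ρ` as before,
`Ω ⊆ {0,1}^ℕ` with the product topology and `Π_ρ : Ω → ℝ/ℤ` the continuous map
`ω ↦ lim_N Σ_{j=0}^{N} ω j * S j * ρ (mod 1)`: the map `Π_ρ : Ω → ℝ/ℤ` is surjective. -/
theorem stmt_9 (a : ℕ → ℕ) (ha : ∀ k, 1 ≤ k → 1 ≤ a k)
    (q : ℕ → ℕ) (hq0 : q 0 = 1) (hq1 : q 1 = a 1)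
    (hq : ∀ k, 1 ≤ k → q (k + 1) = a (k + 1) * q k + q (k - 1))
    (p : ℕ → ℕ) (hp0 : p 0 = 0) (hp1 : p 1 = 1)
    (hp : ∀ k, 1 ≤ k → p (k + 1) = a (k + 1) * p k + p (k - 1))
    (ρ : ℝ) (hρirr : Irrational ρ) (hρmem : ρ ∈ Set.Ioo (0 : ℝ) 1)
    (hρlim : Filter.Tendsto (fun k => (p k : ℝ) / (q k : ℝ)) Filter.atTop (nhds ρ))
    (r : ℕ → ℕ) (hr1 : r 1 = q 1 - 1)
    (hr : ∀ k, 1 ≤ k → r (k + 1) = r k + a (k + 1))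
    (S : ℕ → ℕ) (hSlow : ∀ j, j ≤ r 1 → S j = j + 1)
    (hShigh : ∀ k, 1 ≤ k → ∀ j, j < a (k + 1) → S (r k + j) = (j + 1) * q k)
    (Pi : {ω : ℕ → Bool //
        ∀ j, ∑ i ∈ Finset.range (j + 1), (ω i).toNat * S i < S (j + 1)} → AddCircle (1 : ℝ))
    (hPicont : Continuous Pi)
    (hPi : ∀ ω, Filter.Tendsto
        (fun N => ((↑(∑ j ∈ Finset.range (N + 1),
            ((ω.val j).toNat : ℝ) * (S j : ℝ) * ρ)) : AddCircle (1 : ℝ)))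
        Filter.atTop (nhds (Pi ω))) :
    Function.Surjective Pi :=
  stmt_9_general a ha q hq0 hq1 hq ρ hρirr r hr S hSlow hShigh Pi hPicont hPi
end

section
/- For every c ∈ ℂ there exist R > 0 and an injective holomorphic map φ defined on { z ∈ ℂ : |z| > R } such that: |z| > R implies |z² + c| > R; φ(z² + c) = φ(z)² for all z with |z| > R; and φ(z)/z → 1 as |z| → ∞ (Böttcher coordinate of f_c(z) = z² + c at infinity, conjugating f_c to z ↦ z²). -/
/-!
The Böttcher coordinate is `φ z = lim (f_c^[n] z) ^ (1 / 2 ^ n)`, written as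
`φ z = z * exp (∑ₖ 2⁻ᵏ⁻¹ log (1 + c / (f_c^[k] z) ^ 2))`. Outside the disc of radius
`R = ‖c‖ + 4` the orbit grows at least like `2 ^ k * ‖z‖`, so the series converges
geometrically and uniformly, giving holomorphy and `φ z / z → 1`; the functional equation
`φ ∘ f_c = φ ^ 2` is a shift of the series. If `φ z = φ w`, then `φ` agrees at all iterates,
and since `φ` is within `R / 2` of the identity, the orbits of `z` and `w` stay within
distance `R`; but `f_c x - f_c y = (x - y) (x + y)` with `‖x + y‖ ≥ R`, so their distance
grows like `R ^ n` unless `z = w`.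
-/

open Complex Filter

lemma eq_zero_of_bounded_of_expanding {a : ℕ → ℝ} {r B : ℝ} (hr : 1 < r) (ha : 0 ≤ a 0)
    (hgrow : ∀ n, r * a n ≤ a (n + 1)) (hB : ∀ n, a n ≤ B) : a 0 = 0 := by
  have hpow : ∀ n, r ^ n * a 0 ≤ a n := by
    intro n
    induction n with
    | zero => simp
    | succ n ih =>
      calc r ^ (n + 1) * a 0 = r * (r ^ n * a 0) := by ring
        _ ≤ r * a n := by gcongr
        _ ≤ a (n + 1) := hgrow n
  by_contra hne
  obtain ⟨n, hn⟩ := pow_unbounded_of_one_lt (B / a 0) hr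
  have := (div_lt_iff₀ (ha.lt_of_ne' hne)).1 hn
  linarith [hpow n, hB n]

noncomputable section

namespace QuadraticBoettcher

variable (c : ℂ)

def quadMap (z : ℂ) : ℂ := z ^ 2 + c

def escapeRadius : ℝ := ‖c‖ + 4

def logTerm (k : ℕ) (z : ℂ) : ℂ :=
  (1 / 2 : ℂ) ^ (k + 1) * log (1 + c / ((quadMap c)^[k] z) ^ 2)

def logSeries (z : ℂ) : ℂ := ∑' k, logTerm c k z

def boettcher (z : ℂ) : ℂ := z * exp (logSeries c z)

lemma one_lt_escapeRadius : 1 < escapeRadius c := by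
  unfold escapeRadius; linarith [norm_nonneg c]

lemma escapeRadius_pos : 0 < escapeRadius c := one_pos.trans (one_lt_escapeRadius c)

variable {c}

lemma two_mul_norm_le_norm_quadMap {z : ℂ} (hz : escapeRadius c < ‖z‖) :
    2 * ‖z‖ ≤ ‖quadMap c z‖ := by
  have h : ‖z‖ ^ 2 - ‖c‖ ≤ ‖quadMap c z‖ := by
    have := norm_sub_norm_le (z ^ 2) (-c)
    rwa [norm_pow, norm_neg, sub_neg_eq_add] at this
  unfold escapeRadius at hz
  nlinarith [norm_nonneg c]

lemma escapeRadius_lt_norm_quadMap {z : ℂ} (hz : escapeRadius c < ‖z‖) :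
    escapeRadius c < ‖quadMap c z‖ := by
  linarith [two_mul_norm_le_norm_quadMap hz, escapeRadius_pos c]

lemma escapeRadius_lt_norm_iterate {z : ℂ} (hz : escapeRadius c < ‖z‖) (k : ℕ) :
    escapeRadius c < ‖(quadMap c)^[k] z‖ := by
  induction k with
  | zero => exact hz
  | succ k ih => rw [Function.iterate_succ_apply']; exact escapeRadius_lt_norm_quadMap ih

lemma two_pow_mul_norm_le_norm_iterate {z : ℂ} (hz : escapeRadius c < ‖z‖) (k : ℕ) :
    2 ^ k * ‖z‖ ≤ ‖(quadMap c)^[k] z‖ := by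
  induction k with
  | zero => simp
  | succ k ih =>
    rw [Function.iterate_succ_apply']
    calc 2 ^ (k + 1) * ‖z‖ = 2 * (2 ^ k * ‖z‖) := by ring
      _ ≤ 2 * ‖(quadMap c)^[k] z‖ := by gcongr
      _ ≤ _ := two_mul_norm_le_norm_quadMap (escapeRadius_lt_norm_iterate hz k)

lemma norm_div_sq_le_half {u : ℂ} (hu : escapeRadius c < ‖u‖) :
    ‖c / u ^ 2‖ ≤ 1 / 2 := by
  have hu0 : 0 < ‖u‖ := (escapeRadius_pos c).trans hu
  unfold escapeRadius at hu
  rw [norm_div, norm_pow, div_le_iff₀ (by positivity)]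
  nlinarith [norm_nonneg c]

lemma one_add_div_sq_mem_slitPlane {u : ℂ} (hu : escapeRadius c < ‖u‖) :
    1 + c / u ^ 2 ∈ slitPlane :=
  mem_slitPlane_of_norm_lt_one ((norm_div_sq_le_half hu).trans_lt (by norm_num))

lemma norm_logTerm_le {z : ℂ} (hz : escapeRadius c < ‖z‖) (k : ℕ) :
    ‖logTerm c k z‖ ≤ ‖c‖ / ‖z‖ ^ 2 * (1 / 8) ^ k := by
  set u := (quadMap c)^[k] z
  have hz0 : 0 < ‖z‖ := (escapeRadius_pos c).trans hz
  have hlog :=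
    norm_log_one_add_half_le_self (norm_div_sq_le_half (escapeRadius_lt_norm_iterate hz k))
  have hsmall : ‖c / u ^ 2‖ ≤ ‖c‖ / (4 ^ k * ‖z‖ ^ 2) := by
    rw [norm_div, norm_pow]
    gcongr
    calc 4 ^ k * ‖z‖ ^ 2 = (2 ^ k * ‖z‖) ^ 2 := by
          rw [mul_pow, ← pow_mul, pow_mul']; norm_num
      _ ≤ ‖u‖ ^ 2 := by gcongr; exact two_pow_mul_norm_le_norm_iterate hz k
  calc ‖logTerm c k z‖ = (1 / 2) ^ (k + 1) * ‖log (1 + c / u ^ 2)‖ := by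
        simp [logTerm, u, norm_pow]
    _ ≤ (1 / 2) ^ (k + 1) * (3 / 2 * (‖c‖ / (4 ^ k * ‖z‖ ^ 2))) := by gcongr; linarith
    _ = 3 / 4 * (‖c‖ / ‖z‖ ^ 2 * (1 / 8) ^ k) := by
        rw [show (1 / 8 : ℝ) = 1 / 2 * (1 / 4) by norm_num, mul_pow, one_div_pow (4 : ℝ)]
        field_simp
        ring
    _ ≤ ‖c‖ / ‖z‖ ^ 2 * (1 / 8) ^ k := by
        have : 0 ≤ ‖c‖ / ‖z‖ ^ 2 * (1 / 8 : ℝ) ^ k := by positivity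
        linarith

lemma summable_logTerm {z : ℂ} (hz : escapeRadius c < ‖z‖) : Summable (logTerm c · z) :=
  .of_norm_bounded ((summable_geometric_of_lt_one (by norm_num) (by norm_num)).mul_left _)
    (norm_logTerm_le hz)

lemma norm_logSeries_le {z : ℂ} (hz : escapeRadius c < ‖z‖) :
    ‖logSeries c z‖ ≤ 2 * ‖c‖ / ‖z‖ ^ 2 := by
  have hsum := (hasSum_geometric_of_lt_one (r := (1 / 8 : ℝ)) (by norm_num)
    (by norm_num)).mul_left (‖c‖ / ‖z‖ ^ 2)
  calc ‖logSeries c z‖ ≤ ‖c‖ / ‖z‖ ^ 2 * (1 - 1 / 8)⁻¹ :=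
        tsum_of_norm_bounded hsum (norm_logTerm_le hz)
    _ ≤ ‖c‖ / ‖z‖ ^ 2 * 2 := by gcongr; norm_num
    _ = 2 * ‖c‖ / ‖z‖ ^ 2 := by ring

lemma norm_logSeries_le_one {z : ℂ} (hz : escapeRadius c < ‖z‖) :
    ‖logSeries c z‖ ≤ 1 := by
  refine (norm_logSeries_le hz).trans ?_
  have hz0 : 0 < ‖z‖ := (escapeRadius_pos c).trans hz
  unfold escapeRadius at hz
  rw [div_le_one (by positivity)]
  nlinarith [norm_nonneg c]

lemma two_mul_logSeries {z : ℂ} (hz : escapeRadius c < ‖z‖) :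
    2 * logSeries c z = log (1 + c / z ^ 2) + logSeries c (quadMap c z) := by
  rw [logSeries, ← tsum_mul_left, ((summable_logTerm hz).mul_left 2).tsum_eq_zero_add]
  congr 1
  · simp [logTerm]
  · refine tsum_congr fun k => ?_
    simp only [logTerm, Function.iterate_succ_apply]
    ring

lemma boettcher_quadMap {z : ℂ} (hz : escapeRadius c < ‖z‖) :
    boettcher c (quadMap c z) = boettcher c z ^ 2 := by
  have hz0 : z ≠ 0 := norm_pos_iff.1 ((escapeRadius_pos c).trans hz)
  have hexp : exp (log (1 + c / z ^ 2)) = 1 + c / z ^ 2 :=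
    exp_log (slitPlane_ne_zero (one_add_div_sq_mem_slitPlane hz))
  calc boettcher c (quadMap c z) = z ^ 2 * (1 + c / z ^ 2) * exp (logSeries c (quadMap c z)) := by
        rw [boettcher, quadMap]; field_simp
    _ = z ^ 2 * exp (2 * logSeries c z) := by rw [two_mul_logSeries hz, exp_add, hexp]; ring
    _ = boettcher c z ^ 2 := by rw [boettcher, mul_pow, ← exp_nat_mul]; norm_num

lemma boettcher_iterate {z : ℂ} (hz : escapeRadius c < ‖z‖) (n : ℕ) :
    boettcher c ((quadMap c)^[n] z) = boettcher c z ^ 2 ^ n := by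
  induction n with
  | zero => simp
  | succ n ih =>
    rw [Function.iterate_succ_apply', boettcher_quadMap (escapeRadius_lt_norm_iterate hz n), ih,
      ← pow_mul, pow_succ]

lemma norm_boettcher_sub_le {z : ℂ} (hz : escapeRadius c < ‖z‖) :
    ‖boettcher c z - z‖ ≤ escapeRadius c / 2 := by
  have hR := escapeRadius_pos c
  have hz0 : 0 < ‖z‖ := hR.trans hz
  calc ‖boettcher c z - z‖ = ‖z‖ * ‖exp (logSeries c z) - 1‖ := by
        rw [boettcher, ← norm_mul, mul_sub, mul_one]
    _ ≤ ‖z‖ * (2 * (2 * ‖c‖ / ‖z‖ ^ 2)) := by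
        gcongr
        exact (norm_exp_sub_one_le (norm_logSeries_le_one hz)).trans
          (by gcongr; exact norm_logSeries_le hz)
    _ = 4 * ‖c‖ / ‖z‖ := by field_simp; ring
    _ ≤ 4 * ‖c‖ / escapeRadius c := by gcongr
    _ ≤ escapeRadius c / 2 := by
        rw [div_le_div_iff₀ hR two_pos]
        unfold escapeRadius
        nlinarith [norm_nonneg c]

lemma injOn_boettcher : Set.InjOn (boettcher c) {z | escapeRadius c < ‖z‖} := by
  intro z hz w hw hzw
  set a : ℕ → ℝ := fun n => ‖(quadMap c)^[n] z - (quadMap c)^[n] w‖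
  have hbound : ∀ n, a n ≤ escapeRadius c := fun n => by
    set x := (quadMap c)^[n] z
    set y := (quadMap c)^[n] w
    have hxy : boettcher c x = boettcher c y := by
      rw [boettcher_iterate hz, boettcher_iterate hw, hzw]
    calc a n = ‖(boettcher c y - y) - (boettcher c x - x)‖ := by
          rw [hxy, sub_sub_sub_cancel_left]
      _ ≤ escapeRadius c / 2 + escapeRadius c / 2 :=
          norm_sub_le_of_le (norm_boettcher_sub_le (escapeRadius_lt_norm_iterate hw n))
            (norm_boettcher_sub_le (escapeRadius_lt_norm_iterate hz n))
      _ = escapeRadius c := add_halves _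
  have hgrow : ∀ n, escapeRadius c * a n ≤ a (n + 1) := fun n => by
    set x := (quadMap c)^[n] z
    set y := (quadMap c)^[n] w
    have hsum : escapeRadius c ≤ ‖x + y‖ := by
      have h := norm_sub_norm_le (2 * x) (x - y)
      rw [norm_mul, Complex.norm_two, show 2 * x - (x - y) = x + y by ring] at h
      linarith [(hbound n : ‖x - y‖ ≤ _), escapeRadius_lt_norm_iterate hz n]
    calc escapeRadius c * a n ≤ ‖x + y‖ * ‖x - y‖ := by gcongr
      _ = a (n + 1) := by
          rw [← norm_mul]
          simp only [a, Function.iterate_succ_apply']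
          congr 1
          simp only [quadMap]
          ring
  simpa [a, sub_eq_zero] using
    eq_zero_of_bounded_of_expanding (one_lt_escapeRadius c) (norm_nonneg (z - w)) hgrow hbound

lemma differentiableOn_logTerm (k : ℕ) :
    DifferentiableOn ℂ (logTerm c k) {z | escapeRadius c < ‖z‖} := by
  intro z hz
  have hk := escapeRadius_lt_norm_iterate hz k
  have hiter : Differentiable ℂ (quadMap c)^[k] :=
    Differentiable.iterate (fun z => (differentiableAt_pow 2).add_const c) k
  have hne : ((quadMap c)^[k] z) ^ 2 ≠ 0 :=
    pow_ne_zero 2 (norm_pos_iff.1 ((escapeRadius_pos c).trans hk))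
  have hinner : DifferentiableAt ℂ (fun z => 1 + c / ((quadMap c)^[k] z) ^ 2) z :=
    (differentiableAt_const 1).add ((differentiableAt_const c).div ((hiter z).pow 2) hne)
  exact (((differentiableAt_log (one_add_div_sq_mem_slitPlane hk)).comp z hinner).const_mul
    _).differentiableWithinAt

lemma differentiableOn_logSeries :
    DifferentiableOn ℂ (logSeries c) {z | escapeRadius c < ‖z‖} := by
  refine differentiableOn_tsum_of_summable_norm
    ((summable_geometric_of_lt_one (r := (1 / 8 : ℝ)) (by norm_num) (by norm_num)).mul_left
      (‖c‖ / escapeRadius c ^ 2)) differentiableOn_logTerm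
    (isOpen_lt continuous_const continuous_norm) fun k z hz => ?_
  refine (norm_logTerm_le hz k).trans ?_
  have := escapeRadius_pos c
  gcongr
  exact hz.le

lemma differentiableOn_boettcher :
    DifferentiableOn ℂ (boettcher c) {z | escapeRadius c < ‖z‖} :=
  differentiableOn_id.mul differentiableOn_logSeries.cexp

lemma tendsto_boettcher_div_self :
    Tendsto (fun z => boettcher c z / z) (Bornology.cobounded ℂ) (nhds 1) := by
  have hnorm := tendsto_norm_cobounded_atTop (E := ℂ)
  have hfar : ∀ᶠ z : ℂ in Bornology.cobounded ℂ, escapeRadius c < ‖z‖ :=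
    hnorm.eventually_gt_atTop _
  have hseries : Tendsto (logSeries c) (Bornology.cobounded ℂ) (nhds 0) := by
    refine squeeze_zero_norm' (hfar.mono fun z hz => norm_logSeries_le hz) ?_
    simpa using (tendsto_const_nhds (x := 2 * ‖c‖)).div_atTop
      ((tendsto_pow_atTop two_ne_zero).comp hnorm)
  have hexp := (continuous_exp.tendsto 0).comp hseries
  rw [exp_zero] at hexp
  refine hexp.congr' (hfar.mono fun z hz => ?_)
  have hz0 : z ≠ 0 := norm_pos_iff.1 ((escapeRadius_pos c).trans hz)
  simp [boettcher, hz0]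

end QuadraticBoettcher

/-- For every `c ∈ ℂ` there exist `R > 0` and an injective holomorphic
map `φ` on `{ z : |z| > R }` such that `|z| > R → |z² + c| > R`, `φ (z² + c) = (φ z)²`
for all `|z| > R`, and `φ z / z → 1` as `|z| → ∞` (the Böttcher coordinate of
`f_c(z) = z² + c` at infinity, conjugating `f_c` to `z ↦ z²`). -/
theorem stmt_13 (c : ℂ) :
    ∃ R : ℝ, 0 < R ∧
    ∃ φ : ℂ → ℂ,
      Set.InjOn φ {z : ℂ | R < ‖z‖} ∧
      DifferentiableOn ℂ φ {z : ℂ | R < ‖z‖} ∧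
      (∀ z : ℂ, R < ‖z‖ → R < ‖z ^ 2 + c‖) ∧
      (∀ z : ℂ, R < ‖z‖ → φ (z ^ 2 + c) = (φ z) ^ 2) ∧
      Filter.Tendsto (fun z => φ z / z) (Bornology.cobounded ℂ) (nhds 1) := by
  open QuadraticBoettcher in
  exact ⟨escapeRadius c, escapeRadius_pos c, boettcher c, injOn_boettcher,
    differentiableOn_boettcher, fun _ => escapeRadius_lt_norm_quadMap, fun _ => boettcher_quadMap,
    tendsto_boettcher_div_self⟩
end
end
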